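/- arXiv:2110.15591 — 8 statements merged into one kernel-verified Lean document; each statement's English description precedes it below -/
import Mathlib

section
/- (Dimension theorem) The affine span of S has dimension n−1 if m₁ = m₂ = m₃, and dimension n otherwise. -/
/-!
Let `φ : ℝ^S → ℝ^(2n)` send a weight vector `w` to `∑ w s • s`. The direction of the affine span
is the image under `φ` of the hyperplane `∑ w s = 0`, so its dimension is `|S| - 1 - d`, where `d`
is the dimension of the affine relations: the linear relations of total weight `0`. The space of
all linear relations has dimension `|S| - n = 2`. The differences of the indicator vectors of two
colour classes are relations, of total weight `mᵢ - mⱼ`. If all `mᵢ` agree, two independent such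
differences span every relation, so `d = 2`; otherwise some relation has nonzero total weight,
so `d ≤ 1`, and the dimension is `n` since it cannot exceed `dim span S = n`.
-/

open Module Finset

theorem Submodule.finrank_map_add_finrank_inf_ker {K V W : Type*} [Field K] [AddCommGroup V]
    [Module K V] [AddCommGroup W] [Module K W] [FiniteDimensional K V]
    (f : V →ₗ[K] W) (p : Submodule K V) :
    finrank K (p.map f) + finrank K ↥(p ⊓ LinearMap.ker f) = finrank K p := by
  have h := (f.domRestrict p).finrank_range_add_finrank_ker
  rwa [LinearMap.range_domRestrict, LinearMap.ker_domRestrict,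
    ← Submodule.finrank_map_subtype_eq, Submodule.map_comap_subtype] at h

section AffineRelations

variable (k : Type*) {ι V : Type*} [Field k] [Fintype ι] [AddCommGroup V] [Module k V]

def totalWeight : (ι → k) →ₗ[k] k := Fintype.linearCombination k fun _ => 1

variable {k} in
@[simp]
theorem totalWeight_apply (w : ι → k) : totalWeight k w = ∑ i, w i := by
  simp [totalWeight, Fintype.linearCombination_apply]

def affineRelations (v : ι → V) : Submodule k (ι → k) :=
  LinearMap.ker (Fintype.linearCombination k v) ⊓ LinearMap.ker (totalWeight k)

theorem finrank_ker_totalWeight [Nonempty ι] :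
    finrank k (LinearMap.ker (totalWeight k : (ι → k) →ₗ[k] k)) = Fintype.card ι - 1 := by
  classical
  have hsurj : Function.Surjective (totalWeight k : (ι → k) →ₗ[k] k) := fun c =>
    ⟨Pi.single (Classical.arbitrary ι) c, by simp⟩
  have h := (totalWeight k : (ι → k) →ₗ[k] k).finrank_range_add_finrank_ker
  rw [LinearMap.range_eq_top.2 hsurj, finrank_top, finrank_self,
    finrank_fintype_fun_eq_card] at h
  omega

theorem vectorSpan_range_eq_map_ker_totalWeight [Nonempty ι] (v : ι → V) :
    vectorSpan k (Set.range v) =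
      (LinearMap.ker (totalWeight k)).map (Fintype.linearCombination k v) := by
  classical
  obtain ⟨i₀⟩ := ‹Nonempty ι›
  apply le_antisymm
  · rw [vectorSpan_range_eq_span_range_vsub_right k v i₀, Submodule.span_le]
    rintro _ ⟨i, rfl⟩
    refine ⟨Pi.single i 1 - Pi.single i₀ 1, by simp, ?_⟩
    simp [vsub_eq_sub]
  · rintro _ ⟨w, hw, rfl⟩
    have hw : ∑ i, w i = 0 := by simpa using hw
    have h : Fintype.linearCombination k v w = ∑ i, w i • (v i -ᵥ v i₀) := by
      simp [Fintype.linearCombination_apply, vsub_eq_sub, smul_sub, sum_sub_distrib,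
        ← sum_smul, hw]
    rw [h]
    exact Submodule.sum_mem _ fun i _ => Submodule.smul_mem _ _ <|
      vsub_mem_vectorSpan k (Set.mem_range_self i) (Set.mem_range_self i₀)

theorem finrank_vectorSpan_add_finrank_affineRelations [Nonempty ι] (v : ι → V) :
    finrank k (vectorSpan k (Set.range v)) + finrank k (affineRelations k v) =
      Fintype.card ι - 1 := by
  rw [vectorSpan_range_eq_map_ker_totalWeight, affineRelations, inf_comm,
    Submodule.finrank_map_add_finrank_inf_ker, finrank_ker_totalWeight]

theorem finrank_ker_linearCombination_add_finrank_span (v : ι → V) :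
    finrank k (LinearMap.ker (Fintype.linearCombination k v)) +
      finrank k (Submodule.span k (Set.range v)) = Fintype.card ι := by
  rw [add_comm, ← Fintype.range_linearCombination, LinearMap.finrank_range_add_finrank_ker,
    finrank_fintype_fun_eq_card]

theorem vectorSpan_le_span (s : Set V) : vectorSpan k s ≤ Submodule.span k s := by
  rw [vectorSpan_def, Submodule.span_le]
  rintro _ ⟨a, ha, b, hb, rfl⟩
  exact sub_mem (Submodule.subset_span ha) (Submodule.subset_span hb)

end AffineRelations

section SubsetWeights

variable (k : Type*) {V : Type*} [Field k] [DecidableEq V] (S : Finset V)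

def subsetWeight (A : Finset V) : S → k := fun s => if (s : V) ∈ A then 1 else 0

variable {k S}

theorem totalWeight_subsetWeight {A : Finset V} (hA : A ⊆ S) :
    totalWeight k (subsetWeight k S A) = #A := by
  rw [totalWeight_apply]
  simp only [subsetWeight]
  rw [sum_coe_sort S (fun x => if x ∈ A then (1 : k) else 0), sum_ite_mem, inter_eq_right.2 hA]
  simp

theorem totalWeight_subsetWeight_sub {A B : Finset V} (hA : A ⊆ S) (hB : B ⊆ S) :
    totalWeight k (subsetWeight k S A - subsetWeight k S B) = #A - #B := by
  rw [map_sub, totalWeight_subsetWeight hA, totalWeight_subsetWeight hB]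

variable [AddCommGroup V] [Module k V]

theorem linearCombination_subsetWeight {A : Finset V} (hA : A ⊆ S) :
    Fintype.linearCombination k ((↑) : S → V) (subsetWeight k S A) = ∑ x ∈ A, x := by
  rw [Fintype.linearCombination_apply]
  simp only [subsetWeight, ite_smul, one_smul, zero_smul]
  rw [sum_coe_sort S (fun x => if x ∈ A then x else 0), sum_ite_mem, inter_eq_right.2 hA]

theorem subsetWeight_sub_mem_ker {A B : Finset V} (hA : A ⊆ S) (hB : B ⊆ S)
    (hAB : ∑ x ∈ A, x = ∑ x ∈ B, x) :
    subsetWeight k S A - subsetWeight k S B ∈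
      LinearMap.ker (Fintype.linearCombination k ((↑) : S → V)) := by
  rw [LinearMap.mem_ker, map_sub, linearCombination_subsetWeight hA,
    linearCombination_subsetWeight hB, hAB, sub_self]

theorem affineRelations_lt_ker_of_card_ne [CharZero k] {A B : Finset V} (hA : A ⊆ S)
    (hB : B ⊆ S) (hAB : ∑ x ∈ A, x = ∑ x ∈ B, x) (hcard : #A ≠ #B) :
    affineRelations k ((↑) : S → V) <
      LinearMap.ker (Fintype.linearCombination k ((↑) : S → V)) := by
  refine lt_of_le_of_ne inf_le_left fun h => ?_
  have hmem := h ▸ subsetWeight_sub_mem_ker (k := k) hA hB hAB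
  have hr : (#A : k) - #B = 0 := by
    rw [← totalWeight_subsetWeight_sub hA hB]
    exact hmem.2
  exact hcard (by exact_mod_cast sub_eq_zero.1 hr)

theorem affineRelations_eq_ker_of_card_eq {V₁ V₂ V₃ : Finset V} (h₁ : V₁ ⊆ S) (h₂ : V₂ ⊆ S)
    (h₃ : V₃ ⊆ S) (hd₁₂ : Disjoint V₁ V₂) (hd₁₃ : Disjoint V₁ V₃) (hd₂₃ : Disjoint V₂ V₃)
    (hne₂ : V₂.Nonempty) (hne₃ : V₃.Nonempty)
    (hs₁₂ : ∑ x ∈ V₁, x = ∑ x ∈ V₂, x) (hs₂₃ : ∑ x ∈ V₂, x = ∑ x ∈ V₃, x)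
    (hc₁₂ : #V₁ = #V₂) (hc₂₃ : #V₂ = #V₃)
    (hker : finrank k (LinearMap.ker (Fintype.linearCombination k ((↑) : S → V))) ≤ 2) :
    affineRelations k ((↑) : S → V) =
      LinearMap.ker (Fintype.linearCombination k ((↑) : S → V)) := by
  set r₁ := subsetWeight k S V₁ - subsetWeight k S V₂
  set r₂ := subsetWeight k S V₂ - subsetWeight k S V₃
  have hr₁ : r₁ ∈ affineRelations k ((↑) : S → V) :=
    ⟨subsetWeight_sub_mem_ker h₁ h₂ hs₁₂, by simp [r₁, totalWeight_subsetWeight_sub h₁ h₂, hc₁₂]⟩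
  have hr₂ : r₂ ∈ affineRelations k ((↑) : S → V) :=
    ⟨subsetWeight_sub_mem_ker h₂ h₃ hs₂₃, by simp [r₂, totalWeight_subsetWeight_sub h₂ h₃, hc₂₃]⟩
  obtain ⟨v₂, hv₂⟩ := hne₂
  obtain ⟨v₃, hv₃⟩ := hne₃
  have hli : LinearIndependent k ![r₁, r₂] := by
    rw [LinearIndependent.pair_iff]
    intro a b hab
    have at₂ := congrFun hab ⟨v₂, h₂ hv₂⟩
    have at₃ := congrFun hab ⟨v₃, h₃ hv₃⟩
    simp [r₁, r₂, subsetWeight, hv₂, hv₃, disjoint_right.1 hd₁₂ hv₂, disjoint_left.1 hd₂₃ hv₂,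
      disjoint_right.1 hd₁₃ hv₃, disjoint_right.1 hd₂₃ hv₃] at at₂ at₃
    exact ⟨by simpa [at₃] using at₂, at₃⟩
  refine Submodule.eq_of_le_of_finrank_le inf_le_left ?_
  calc finrank k (LinearMap.ker (Fintype.linearCombination k ((↑) : S → V)))
      ≤ finrank k (Submodule.span k (Set.range ![r₁, r₂])) := by
        rwa [finrank_span_eq_card hli, Fintype.card_fin]
    _ ≤ finrank k (affineRelations k ((↑) : S → V)) := by
        refine Submodule.finrank_mono (Submodule.span_le.2 (Set.range_subset_iff.2 ?_))
        intro i
        fin_cases i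
        exacts [hr₁, hr₂]

end SubsetWeights

theorem stmt_1_general
    (n : ℕ)
    (S V1 V2 V3 : Finset (Fin (2 * n) → ℝ))
    (hScard : S.card = n + 2)
    (hunion : V1 ∪ V2 ∪ V3 = S)
    (hd12 : Disjoint V1 V2) (hd13 : Disjoint V1 V3) (hd23 : Disjoint V2 V3)
    (hne2 : V2.Nonempty) (hne3 : V3.Nonempty)
    (hsum1 : ∑ v ∈ V1, v = fun _ => (1 : ℝ))
    (hsum2 : ∑ v ∈ V2, v = fun _ => (1 : ℝ))
    (hsum3 : ∑ v ∈ V3, v = fun _ => (1 : ℝ))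
    (hspan : Module.finrank ℝ (Submodule.span ℝ (S : Set (Fin (2 * n) → ℝ))) = n)
    : Module.finrank ℝ (affineSpan ℝ (S : Set (Fin (2 * n) → ℝ))).direction = if V1.card = V2.card ∧ V2.card = V3.card then n - 1 else n := by
  classical
  have h₁ : V1 ⊆ S := hunion ▸ subset_union_left.trans subset_union_left
  have h₂ : V2 ⊆ S := hunion ▸ subset_union_right.trans subset_union_left
  have h₃ : V3 ⊆ S := hunion ▸ subset_union_right
  have : Nonempty S := (card_pos.1 (by omega)).to_subtype
  have hdim := finrank_vectorSpan_add_finrank_affineRelations ℝ ((↑) : S → Fin (2 * n) → ℝ)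
  have hker := finrank_ker_linearCombination_add_finrank_span ℝ ((↑) : S → Fin (2 * n) → ℝ)
  rw [Subtype.range_coe_subtype, Finset.setOfPred_mem, Fintype.card_coe] at hdim hker
  rw [direction_affineSpan]
  split_ifs with hc
  · rw [affineRelations_eq_ker_of_card_eq h₁ h₂ h₃ hd12 hd13 hd23 hne2 hne3
      (hsum1.trans hsum2.symm) (hsum2.trans hsum3.symm) hc.1 hc.2 (by omega)] at hdim
    omega
  · have hlt : affineRelations ℝ ((↑) : S → Fin (2 * n) → ℝ) <
        LinearMap.ker (Fintype.linearCombination ℝ ((↑) : S → Fin (2 * n) → ℝ)) := by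
      by_cases hc₁₂ : #V1 = #V2
      · exact affineRelations_lt_ker_of_card_ne h₂ h₃ (hsum2.trans hsum3.symm) (hc ⟨hc₁₂, ·⟩)
      · exact affineRelations_lt_ker_of_card_ne h₁ h₂ (hsum1.trans hsum2.symm) hc₁₂
    have := Submodule.finrank_lt_finrank_of_lt hlt
    have := Submodule.finrank_mono (vectorSpan_le_span ℝ (S : Set (Fin (2 * n) → ℝ)))
    omega

theorem stmt_1
    (n : ℕ) (hn : 0 < n)
    (S V1 V2 V3 : Finset (Fin (2 * n) → ℝ))
    (h01 : ∀ v ∈ S, ∀ i, v i = 0 ∨ v i = 1)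
    (hScard : S.card = n + 2)
    (hunion : V1 ∪ V2 ∪ V3 = S)
    (hd12 : Disjoint V1 V2) (hd13 : Disjoint V1 V3) (hd23 : Disjoint V2 V3)
    (hne1 : V1.Nonempty) (hne2 : V2.Nonempty) (hne3 : V3.Nonempty)
    (hsum1 : ∑ v ∈ V1, v = fun _ => (1 : ℝ))
    (hsum2 : ∑ v ∈ V2, v = fun _ => (1 : ℝ))
    (hsum3 : ∑ v ∈ V3, v = fun _ => (1 : ℝ))
    (hspan : Module.finrank ℝ (Submodule.span ℝ (S : Set (Fin (2 * n) → ℝ))) = n)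
    : Module.finrank ℝ (affineSpan ℝ (S : Set (Fin (2 * n) → ℝ))).direction = if V1.card = V2.card ∧ V2.card = V3.card then n - 1 else n :=
  stmt_1_general n S V1 V2 V3 hScard hunion hd12 hd13 hd23 hne2 hne3 hsum1 hsum2 hsum3 hspan
end

section
/- For any v ∈ V₂ and any w ∈ V₃, the set S ∖ {v, w} (which has exactly n elements) is linearly independent over ℝ, and moreover v = Σ_{u ∈ V₁} u − Σ_{u ∈ V₂∖{v}} u and w = Σ_{u ∈ V₁} u − Σ_{u ∈ V₃∖{w}} u. -/
theorem stmt_2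
    (n : ℕ) (hn : 0 < n)
    (S V1 V2 V3 : Finset (Fin (2 * n) → ℝ))
    (h01 : ∀ v ∈ S, ∀ i, v i = 0 ∨ v i = 1)
    (hScard : S.card = n + 2)
    (hunion : V1 ∪ V2 ∪ V3 = S)
    (hd12 : Disjoint V1 V2) (hd13 : Disjoint V1 V3) (hd23 : Disjoint V2 V3)
    (hne1 : V1.Nonempty) (hne2 : V2.Nonempty) (hne3 : V3.Nonempty)
    (hsum1 : ∑ v ∈ V1, v = fun _ => (1 : ℝ))
    (hsum2 : ∑ v ∈ V2, v = fun _ => (1 : ℝ))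
    (hsum3 : ∑ v ∈ V3, v = fun _ => (1 : ℝ))
    (hspan : Module.finrank ℝ (Submodule.span ℝ (S : Set (Fin (2 * n) → ℝ))) = n)
    : ∀ v ∈ V2, ∀ w ∈ V3,
      (S \ {v, w}).card = n ∧
      LinearIndependent ℝ (fun x : {x // x ∈ S \ {v, w}} => (x : Fin (2 * n) → ℝ)) ∧
      v = ∑ u ∈ V1, u - ∑ u ∈ V2 \ {v}, u ∧
      w = ∑ u ∈ V1, u - ∑ u ∈ V3 \ {w}, u := by
  intro v hv w hw
  have hvw : v ≠ w := fun h => (Finset.disjoint_left.mp hd23 hv) (h ▸ hw)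
  have hvS : v ∈ S := hunion ▸ Finset.mem_union_left _ (Finset.mem_union_right _ hv)
  have hwS : w ∈ S := hunion ▸ Finset.mem_union_right _ hw
  have hsub : ({v, w} : Finset _) ⊆ S := by
    intro x hx
    rcases Finset.mem_insert.mp hx with h | h
    · exact h ▸ hvS
    · exact (Finset.mem_singleton.mp h) ▸ hwS
  have hcard : (S \ {v, w}).card = n := by
    rw [Finset.card_sdiff_of_subset hsub, hScard, Finset.card_insert_of_notMem (by simpa using hvw),
      Finset.card_singleton]
    omega
  have hveq : v = ∑ u ∈ V1, u - ∑ u ∈ V2 \ {v}, u := by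
    have h2 : ∑ u ∈ V2, u = v + ∑ u ∈ V2 \ {v}, u := by
      rw [← Finset.sum_erase_add _ _ hv, Finset.sdiff_singleton_eq_erase]
      ring
    have := hsum1.trans hsum2.symm
    rw [h2] at this
    linear_combination -this
  have hweq : w = ∑ u ∈ V1, u - ∑ u ∈ V3 \ {w}, u := by
    have h3 : ∑ u ∈ V3, u = w + ∑ u ∈ V3 \ {w}, u := by
      rw [← Finset.sum_erase_add _ _ hw, Finset.sdiff_singleton_eq_erase]
      ring
    have := hsum1.trans hsum3.symm
    rw [h3] at this
    linear_combination -this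
  refine ⟨hcard, ?_, hveq, hweq⟩
  -- linear independence
  set T := S \ ({v, w} : Finset _) with hT
  have hV1T : V1 ⊆ T := by
    intro x hx
    refine Finset.mem_sdiff.mpr ⟨hunion ▸ Finset.mem_union_left _ (Finset.mem_union_left _ hx), ?_⟩
    simp only [Finset.mem_insert, Finset.mem_singleton, not_or]
    exact ⟨fun h => Finset.disjoint_left.mp hd12 hx (h ▸ hv),
      fun h => Finset.disjoint_left.mp hd13 hx (h ▸ hw)⟩
  have hV2T : V2 \ {v} ⊆ T := by
    intro x hx
    obtain ⟨hx2, hxv⟩ := Finset.mem_sdiff.mp hx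
    refine Finset.mem_sdiff.mpr ⟨hunion ▸ Finset.mem_union_left _ (Finset.mem_union_right _ hx2), ?_⟩
    simp only [Finset.mem_insert, Finset.mem_singleton, not_or]
    exact ⟨Finset.notMem_singleton.mp hxv, fun h => Finset.disjoint_left.mp hd23 hx2 (h ▸ hw)⟩
  have hV3T : V3 \ {w} ⊆ T := by
    intro x hx
    obtain ⟨hx3, hxw⟩ := Finset.mem_sdiff.mp hx
    refine Finset.mem_sdiff.mpr ⟨hunion ▸ Finset.mem_union_right _ hx3, ?_⟩
    simp only [Finset.mem_insert, Finset.mem_singleton, not_or]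
    exact ⟨fun h => Finset.disjoint_left.mp hd23 hv (h ▸ hx3), Finset.notMem_singleton.mp hxw⟩
  have hspanT : Submodule.span ℝ (T : Set (Fin (2 * n) → ℝ))
      = Submodule.span ℝ (S : Set (Fin (2 * n) → ℝ)) := by
    apply le_antisymm
    · exact Submodule.span_mono (by exact_mod_cast Finset.sdiff_subset)
    · rw [Submodule.span_le]
      intro x hxS
      have hxS' : x ∈ S := by exact_mod_cast hxS
      by_cases hxv : x = v
      · subst hxv
        rw [hveq]
        exact sub_mem
          (Submodule.sum_mem _ fun u hu => Submodule.subset_span (hV1T hu))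
          (Submodule.sum_mem _ fun u hu => Submodule.subset_span (hV2T hu))
      by_cases hxw : x = w
      · subst hxw
        rw [hweq]
        exact sub_mem
          (Submodule.sum_mem _ fun u hu => Submodule.subset_span (hV1T hu))
          (Submodule.sum_mem _ fun u hu => Submodule.subset_span (hV3T hu))
      · exact Submodule.subset_span (Finset.mem_sdiff.mpr ⟨hxS', by
          simp only [Finset.mem_insert, Finset.mem_singleton, not_or]; exact ⟨hxv, hxw⟩⟩)
  apply linearIndependent_iff_card_eq_finrank_span.mpr
  have hrange : Set.range (fun x : {x // x ∈ T} => (x : Fin (2 * n) → ℝ)) = (T : Set _) := by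
    simp [Subtype.range_coe_subtype]
  rw [Set.finrank, hrange, hspanT, hspan, Fintype.card_coe, hcard]
end

section
/- (Gale transform in the case m₃ > m₂ > m₁) Assume m₃ > m₂ > m₁ and set k = (m₃ − m₁)/(m₂ − m₁). Define β : S → ℝ by β(u) = 1−k for u ∈ V₁, β(u) = k for u ∈ V₂, and β(u) = −1 for u ∈ V₃. Then β satisfies Σ_{u∈S} β(u) = 0 and Σ_{u∈S} β(u)·u = 0, and every function c : S → ℝ satisfying Σ_{u∈S} c(u) = 0 and Σ_{u∈S} c(u)·u = 0 is a scalar multiple of β. -/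
/-!
The linear dependences of `S` form a space of dimension `|S| - dim span S = 2`. Since every `Vᵢ`
sums to `𝟙`, it contains the two functions that are constant on each block with values
`(1, -1, 0)` and `(1, 0, -1)`; these are independent because `V₂` and `V₃` are nonempty, so they
span it. Hence every linear dependence is constant on each block, with values `a₁ + a₂ + a₃ = 0`,
and the affine condition `m₁ a₁ + m₂ a₂ + m₃ a₃ = 0` leaves exactly the multiples of `β`.
-/

open Finset Module

theorem Finset.finrank_span_add_finrank_ker_linearCombination (K : Type*) {E : Type*} [Field K]
    [AddCommGroup E] [Module K E] (S : Finset E) :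
    finrank K (Submodule.span K (S : Set E))
      + finrank K (LinearMap.ker (Fintype.linearCombination K (Subtype.val : S → E))) = #S := by
  have hrange : LinearMap.range (Fintype.linearCombination K (Subtype.val : S → E))
      = Submodule.span K (S : Set E) := by
    rw [Fintype.range_linearCombination, Subtype.range_coe]
  rw [← (LinearEquiv.ofEq _ _ hrange).finrank_eq, LinearMap.finrank_range_add_finrank_ker,
    finrank_fintype_fun_eq_card, Fintype.card_coe]

structure Finset.IsPartition₃ {α : Type*} [DecidableEq α] (S V₁ V₂ V₃ : Finset α) : Prop where
  union_eq : V₁ ∪ V₂ ∪ V₃ = S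
  disjoint₁₂ : Disjoint V₁ V₂
  disjoint₁₃ : Disjoint V₁ V₃
  disjoint₂₃ : Disjoint V₂ V₃

def Finset.blockConst {α R : Type*} [DecidableEq α] (V₁ V₂ : Finset α) (a₁ a₂ a₃ : R) (x : α) : R :=
  if x ∈ V₁ then a₁ else if x ∈ V₂ then a₂ else a₃

namespace Finset.IsPartition₃

variable {α : Type*} [DecidableEq α] {S V₁ V₂ V₃ : Finset α}

theorem subset₁ (hV : IsPartition₃ S V₁ V₂ V₃) : V₁ ⊆ S :=
  hV.union_eq ▸ subset_union_left.trans subset_union_left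

theorem subset₂ (hV : IsPartition₃ S V₁ V₂ V₃) : V₂ ⊆ S :=
  hV.union_eq ▸ subset_union_right.trans subset_union_left

theorem subset₃ (hV : IsPartition₃ S V₁ V₂ V₃) : V₃ ⊆ S :=
  hV.union_eq ▸ subset_union_right

theorem forall_mem (hV : IsPartition₃ S V₁ V₂ V₃) {P : α → Prop} (h₁ : ∀ x ∈ V₁, P x)
    (h₂ : ∀ x ∈ V₂, P x) (h₃ : ∀ x ∈ V₃, P x) : ∀ x ∈ S, P x := by
  rw [← hV.union_eq]
  intro x hx
  simp only [mem_union] at hx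
  rcases hx with (hx | hx) | hx
  exacts [h₁ x hx, h₂ x hx, h₃ x hx]

theorem sum_eq (hV : IsPartition₃ S V₁ V₂ V₃) {M : Type*} [AddCommMonoid M] (f : α → M) :
    ∑ x ∈ S, f x = ∑ x ∈ V₁, f x + ∑ x ∈ V₂, f x + ∑ x ∈ V₃, f x := by
  rw [← hV.union_eq, sum_union (disjoint_union_left.2 ⟨hV.disjoint₁₃, hV.disjoint₂₃⟩),
    sum_union hV.disjoint₁₂]

theorem sum_eq_of_forall_mem_eq (hV : IsPartition₃ S V₁ V₂ V₃) {R : Type*} [Semiring R]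
    {c : α → R} {a₁ a₂ a₃ : R} (h₁ : ∀ x ∈ V₁, c x = a₁) (h₂ : ∀ x ∈ V₂, c x = a₂)
    (h₃ : ∀ x ∈ V₃, c x = a₃) :
    ∑ x ∈ S, c x = #V₁ * a₁ + #V₂ * a₂ + #V₃ * a₃ := by
  rw [hV.sum_eq, sum_congr rfl h₁, sum_congr rfl h₂, sum_congr rfl h₃]
  simp only [sum_const, nsmul_eq_mul]

theorem sum_smul_eq_of_forall_mem_eq {R E : Type*} [Semiring R] [AddCommMonoid E] [Module R E]
    [DecidableEq E] {S V₁ V₂ V₃ : Finset E} (hV : IsPartition₃ S V₁ V₂ V₃) {w : E}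
    (hw₁ : ∑ u ∈ V₁, u = w) (hw₂ : ∑ u ∈ V₂, u = w) (hw₃ : ∑ u ∈ V₃, u = w)
    {c : E → R} {a₁ a₂ a₃ : R} (h₁ : ∀ u ∈ V₁, c u = a₁) (h₂ : ∀ u ∈ V₂, c u = a₂)
    (h₃ : ∀ u ∈ V₃, c u = a₃) :
    ∑ u ∈ S, c u • u = (a₁ + a₂ + a₃) • w := by
  have block : ∀ (V : Finset E) (a : R), (∀ u ∈ V, c u = a) → ∑ u ∈ V, c u • u = a • ∑ u ∈ V, u :=
    fun V a h ↦ by rw [smul_sum]; exact sum_congr rfl fun u hu ↦ by rw [h u hu]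
  rw [hV.sum_eq, block _ _ h₁, block _ _ h₂, block _ _ h₃, hw₁, hw₂, hw₃, add_smul, add_smul]

section blockConst

variable {R : Type*} {a₁ a₂ a₃ : R} {x : α}

theorem blockConst_of_mem₁ (hx : x ∈ V₁) : blockConst V₁ V₂ a₁ a₂ a₃ x = a₁ := if_pos hx

theorem blockConst_of_mem₂ (hV : IsPartition₃ S V₁ V₂ V₃) (hx : x ∈ V₂) :
    blockConst V₁ V₂ a₁ a₂ a₃ x = a₂ := by
  rw [blockConst, if_neg (disjoint_right.1 hV.disjoint₁₂ hx), if_pos hx]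

theorem blockConst_of_mem₃ (hV : IsPartition₃ S V₁ V₂ V₃) (hx : x ∈ V₃) :
    blockConst V₁ V₂ a₁ a₂ a₃ x = a₃ := by
  rw [blockConst, if_neg (disjoint_right.1 hV.disjoint₁₃ hx),
    if_neg (disjoint_right.1 hV.disjoint₂₃ hx)]

end blockConst

section LinearDependence

variable {K E : Type*} [Field K] [AddCommGroup E] [Module K E] [DecidableEq E]
  {S V₁ V₂ V₃ : Finset E} {w : E}

theorem exists_eq_of_sum_smul_eq_zero (hV : IsPartition₃ S V₁ V₂ V₃) (hne₂ : V₂.Nonempty)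
    (hne₃ : V₃.Nonempty) (hw₁ : ∑ u ∈ V₁, u = w) (hw₂ : ∑ u ∈ V₂, u = w) (hw₃ : ∑ u ∈ V₃, u = w)
    (hrank : finrank K (Submodule.span K (S : Set E)) + 2 = #S) {c : E → K}
    (hc : ∑ u ∈ S, c u • u = 0) :
    ∃ a₁ a₂ a₃ : K, a₁ + a₂ + a₃ = 0 ∧
      (∀ u ∈ V₁, c u = a₁) ∧ (∀ u ∈ V₂, c u = a₂) ∧ (∀ u ∈ V₃, c u = a₃) := by
  let φ := Fintype.linearCombination K (Subtype.val : S → E)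
  have hφ (f : E → K) : φ (fun u ↦ f u) = ∑ u ∈ S, f u • u :=
    sum_coe_sort S fun u ↦ f u • u
  have hker : finrank K (LinearMap.ker φ) = 2 :=
    Nat.add_left_cancel ((finrank_span_add_finrank_ker_linearCombination K S).trans hrank.symm)
  let d₁₂ : S → K := fun u ↦ blockConst V₁ V₂ 1 (-1) 0 u
  let d₁₃ : S → K := fun u ↦ blockConst V₁ V₂ 1 0 (-1) u
  have mem_ker {a₁ a₂ a₃ : K} (h : a₁ + a₂ + a₃ = 0) :
      (fun u : S ↦ blockConst V₁ V₂ a₁ a₂ a₃ u) ∈ LinearMap.ker φ := by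
    rw [LinearMap.mem_ker, hφ, hV.sum_smul_eq_of_forall_mem_eq hw₁ hw₂ hw₃
      (fun _ ↦ blockConst_of_mem₁) (fun _ ↦ hV.blockConst_of_mem₂) (fun _ ↦ hV.blockConst_of_mem₃),
      h, zero_smul]
  obtain ⟨u₂, hu₂⟩ := hne₂
  obtain ⟨u₃, hu₃⟩ := hne₃
  have hli : LinearIndependent K ![d₁₂, d₁₃] := by
    refine LinearIndependent.pair_iff.2 fun s t hst ↦ ⟨?_, ?_⟩
    · simpa [d₁₂, d₁₃, hV.blockConst_of_mem₂ hu₂] using congrFun hst ⟨u₂, hV.subset₂ hu₂⟩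
    · simpa [d₁₂, d₁₃, hV.blockConst_of_mem₃ hu₃] using congrFun hst ⟨u₃, hV.subset₃ hu₃⟩
  have hspan : Submodule.span K {d₁₂, d₁₃} = LinearMap.ker φ := by
    refine Submodule.eq_of_le_of_finrank_eq ?_ ?_
    · rw [Submodule.span_le, Set.insert_subset_iff, Set.singleton_subset_iff]
      exact ⟨mem_ker (by ring), mem_ker (by ring)⟩
    · rw [← Matrix.range_cons_cons_empty d₁₂ d₁₃ ![], finrank_span_eq_card hli, hker]
      rfl
  have hc' : (fun u : S ↦ c u) ∈ LinearMap.ker φ := by rw [LinearMap.mem_ker, hφ, hc]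
  rw [← hspan, Submodule.mem_span_pair] at hc'
  obtain ⟨a, b, hab⟩ := hc'
  have hcu (u : E) (hu : u ∈ S) :
      c u = a * blockConst V₁ V₂ 1 (-1) 0 u + b * blockConst V₁ V₂ 1 0 (-1) u :=
    (congrFun hab ⟨u, hu⟩).symm
  refine ⟨a + b, -a, -b, by ring, fun u hu ↦ ?_, fun u hu ↦ ?_, fun u hu ↦ ?_⟩
  · rw [hcu u (hV.subset₁ hu), blockConst_of_mem₁ hu, blockConst_of_mem₁ hu]; ring
  · rw [hcu u (hV.subset₂ hu), hV.blockConst_of_mem₂ hu, hV.blockConst_of_mem₂ hu]; ring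
  · rw [hcu u (hV.subset₃ hu), hV.blockConst_of_mem₃ hu, hV.blockConst_of_mem₃ hu]; ring

end LinearDependence

end Finset.IsPartition₃

theorem stmt_3_general
    (n : ℕ)
    (S V1 V2 V3 : Finset (Fin (2 * n) → ℝ))
    (hScard : S.card = n + 2)
    (hunion : V1 ∪ V2 ∪ V3 = S)
    (hd12 : Disjoint V1 V2) (hd13 : Disjoint V1 V3) (hd23 : Disjoint V2 V3)
    (hne2 : V2.Nonempty) (hne3 : V3.Nonempty)
    (hsum1 : ∑ v ∈ V1, v = fun _ => (1 : ℝ))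
    (hsum2 : ∑ v ∈ V2, v = fun _ => (1 : ℝ))
    (hsum3 : ∑ v ∈ V3, v = fun _ => (1 : ℝ))
    (hspan : Module.finrank ℝ (Submodule.span ℝ (S : Set (Fin (2 * n) → ℝ))) = n)
    (h12 : V1.card < V2.card)
    : ∀ k : ℝ, k = ((V3.card : ℝ) - (V1.card : ℝ)) / ((V2.card : ℝ) - (V1.card : ℝ)) →
      ∀ β : (Fin (2 * n) → ℝ) → ℝ,
        (∀ u ∈ V1, β u = 1 - k) → (∀ u ∈ V2, β u = k) → (∀ u ∈ V3, β u = -1) →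
        (∑ u ∈ S, β u = 0 ∧ ∑ u ∈ S, β u • u = 0 ∧
          ∀ c : (Fin (2 * n) → ℝ) → ℝ, ∑ u ∈ S, c u = 0 → ∑ u ∈ S, c u • u = 0 →
            ∃ t : ℝ, ∀ u ∈ S, c u = t * β u) := by
  intro k hk β hβ₁ hβ₂ hβ₃
  have hV : IsPartition₃ S V1 V2 V3 := ⟨hunion, hd12, hd13, hd23⟩
  have hm : (V2.card : ℝ) - V1.card ≠ 0 := sub_ne_zero.2 (mod_cast h12.ne')
  have hk' : k * ((V2.card : ℝ) - V1.card) = (V3.card : ℝ) - V1.card := by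
    rw [hk, div_mul_cancel₀ _ hm]
  refine ⟨?_, ?_, fun c hc₀ hc ↦ ?_⟩
  · rw [hV.sum_eq_of_forall_mem_eq hβ₁ hβ₂ hβ₃]
    linear_combination hk'
  · rw [hV.sum_smul_eq_of_forall_mem_eq hsum1 hsum2 hsum3 hβ₁ hβ₂ hβ₃]
    simp
  obtain ⟨a₁, a₂, a₃, ha, hc₁, hc₂, hc₃⟩ := hV.exists_eq_of_sum_smul_eq_zero hne2 hne3 hsum1 hsum2
    hsum3 (by rw [hspan, hScard]) hc
  have hcard := hV.sum_eq_of_forall_mem_eq hc₁ hc₂ hc₃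
  rw [hc₀] at hcard
  have ha₂ : a₂ = -a₃ * k := mul_right_cancel₀ hm
    (by linear_combination a₃ * hk' - hcard - (V1.card : ℝ) * ha)
  refine ⟨-a₃, hV.forall_mem (fun u hu ↦ ?_) (fun u hu ↦ ?_) (fun u hu ↦ ?_)⟩
  · rw [hc₁ u hu, hβ₁ u hu]
    linear_combination ha - ha₂
  · rw [hc₂ u hu, hβ₂ u hu, ha₂]
  · rw [hc₃ u hu, hβ₃ u hu]
    ring

theorem stmt_3
    (n : ℕ) (hn : 0 < n)
    (S V1 V2 V3 : Finset (Fin (2 * n) → ℝ))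
    (h01 : ∀ v ∈ S, ∀ i, v i = 0 ∨ v i = 1)
    (hScard : S.card = n + 2)
    (hunion : V1 ∪ V2 ∪ V3 = S)
    (hd12 : Disjoint V1 V2) (hd13 : Disjoint V1 V3) (hd23 : Disjoint V2 V3)
    (hne1 : V1.Nonempty) (hne2 : V2.Nonempty) (hne3 : V3.Nonempty)
    (hsum1 : ∑ v ∈ V1, v = fun _ => (1 : ℝ))
    (hsum2 : ∑ v ∈ V2, v = fun _ => (1 : ℝ))
    (hsum3 : ∑ v ∈ V3, v = fun _ => (1 : ℝ))
    (hspan : Module.finrank ℝ (Submodule.span ℝ (S : Set (Fin (2 * n) → ℝ))) = n)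
    (h12 : V1.card < V2.card) (h23 : V2.card < V3.card)
    : ∀ k : ℝ, k = ((V3.card : ℝ) - (V1.card : ℝ)) / ((V2.card : ℝ) - (V1.card : ℝ)) →
      ∀ β : (Fin (2 * n) → ℝ) → ℝ,
        (∀ u ∈ V1, β u = 1 - k) → (∀ u ∈ V2, β u = k) → (∀ u ∈ V3, β u = -1) →
        (∑ u ∈ S, β u = 0 ∧ ∑ u ∈ S, β u • u = 0 ∧
          ∀ c : (Fin (2 * n) → ℝ) → ℝ, ∑ u ∈ S, c u = 0 → ∑ u ∈ S, c u • u = 0 →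
            ∃ t : ℝ, ∀ u ∈ S, c u = t * β u) :=
  stmt_3_general n S V1 V2 V3 hScard hunion hd12 hd13 hd23 hne2 hne3 hsum1 hsum2 hsum3 hspan h12
end

section
/- (Gale transform in the case m₂ = m₃ > m₁) Assume m₃ = m₂ > m₁. Define β : S → ℝ by β(u) = 0 for u ∈ V₁, β(u) = 1 for u ∈ V₂, and β(u) = −1 for u ∈ V₃. Then β satisfies Σ_{u∈S} β(u) = 0 and Σ_{u∈S} β(u)·u = 0, and every function c : S → ℝ satisfying Σ_{u∈S} c(u) = 0 and Σ_{u∈S} c(u)·u = 0 is a scalar multiple of β. -/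
/-!
The linear dependences of `S` form a space of dimension `|S| - dim span S = 2`. It contains `β`
(because `∑ V₂ = ∑ V₃`) and `δ = 𝟙_{V₁} - 𝟙_{V₂}` (because `∑ V₁ = ∑ V₂`), which are independent,
so every dependence is `a β + b δ`. Since `m₂ = m₃`, the coefficient sum of `a β + b δ` is
`b (m₁ - m₂)`, and `m₁ < m₂` forces `b = 0` for an affine dependence.
-/

open Finset Module Submodule

lemma Finset.sum_smul_eq_sum_sub_sum_of_partition {α R M : Type*} [Ring R] [AddCommGroup M]
    [Module R M] [DecidableEq α] {S A B C : Finset α} (hS : A ∪ B ∪ C = S)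
    (hAB : Disjoint A B) (hAC : Disjoint A C) (hBC : Disjoint B C) {f : α → R}
    (hA : ∀ u ∈ A, f u = 0) (hB : ∀ u ∈ B, f u = 1) (hC : ∀ u ∈ C, f u = -1) (g : α → M) :
    ∑ u ∈ S, f u • g u = ∑ u ∈ B, g u - ∑ u ∈ C, g u := by
  rw [← hS, sum_union (disjoint_union_left.2 ⟨hAC, hBC⟩), sum_union hAB,
    sum_eq_zero fun u hu => by rw [hA u hu, zero_smul],
    sum_congr rfl fun u (hu : u ∈ B) => by rw [hB u hu, one_smul],
    sum_congr rfl fun u (hu : u ∈ C) => by rw [hC u hu, neg_one_smul]]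
  simp [sub_eq_add_neg]

lemma linearIndependent_pair_of_apply_eq_zero {ι K : Type*} [Field K] {x y : ι → K} {i j : ι}
    (hxi : x i = 0) (hyi : y i ≠ 0) (hxj : x j ≠ 0) : LinearIndependent K ![x, y] := by
  refine LinearIndependent.pair_iff.2 fun s t hst => ?_
  have ht : t = 0 := by simpa [hxi, hyi] using congrFun hst i
  have hs : s = 0 := by simpa [ht, hxj] using congrFun hst j
  exact ⟨hs, ht⟩

lemma exists_eq_smul_add_smul_of_finrank_le_two {K V : Type*} [Field K] [AddCommGroup V]
    [Module K V] {W : Submodule K V} [FiniteDimensional K W] (hW : finrank K W ≤ 2)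
    {x y : V} (hx : x ∈ W) (hy : y ∈ W) (hxy : LinearIndependent K ![x, y])
    {w : V} (hw : w ∈ W) : ∃ a b : K, a • x + b • y = w := by
  have hspan : span K {x, y} = W := by
    refine eq_of_le_of_finrank_le ((span_le).2 (Set.insert_subset hx (by simpa))) ?_
    have := finrank_span_eq_card hxy
    rw [Matrix.range_cons_cons_empty, Fintype.card_fin] at this
    omega
  rwa [← mem_span_pair, hspan]

section Dependences

variable {K E : Type*} [Field K] [AddCommGroup E] [Module K E]

lemma Finset.linearCombination_coe_apply (S : Finset E) (c : E → K) :
    Fintype.linearCombination K ((↑) : S → E) (fun u => c u) = ∑ u ∈ S, c u • u := by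
  rw [Fintype.linearCombination_apply]
  exact S.sum_coe_sort fun u => c u • u

lemma Finset.finrank_ker_linearCombination_add_finrank_span (S : Finset E) :
    finrank K (LinearMap.ker (Fintype.linearCombination K ((↑) : S → E))) +
      finrank K (span K (S : Set E)) = S.card := by
  have hrange : LinearMap.range (Fintype.linearCombination K ((↑) : S → E)) = span K S := by
    rw [Fintype.range_linearCombination, Subtype.range_coe]
  have := LinearMap.finrank_range_add_finrank_ker (Fintype.linearCombination K ((↑) : S → E))
  rw [hrange, finrank_fintype_fun_eq_card, Fintype.card_coe] at this
  omega

lemma Finset.exists_eq_mul_add_mul_of_sum_smul_eq_zero {S : Finset E}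
    (hS : S.card ≤ finrank K (span K (S : Set E)) + 2) {x y c : E → K}
    (hx : ∑ u ∈ S, x u • u = 0) (hy : ∑ u ∈ S, y u • u = 0) (hc : ∑ u ∈ S, c u • u = 0)
    (hxy : LinearIndependent K ![fun u : S => x u, fun u : S => y u]) :
    ∃ a b : K, ∀ u ∈ S, c u = a * x u + b * y u := by
  have mem_ker (f : E → K) (hf : ∑ u ∈ S, f u • u = 0) :
      (fun u : S => f u) ∈ LinearMap.ker (Fintype.linearCombination K ((↑) : S → E)) := by
    rwa [LinearMap.mem_ker, S.linearCombination_coe_apply]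
  have hker := S.finrank_ker_linearCombination_add_finrank_span (K := K)
  obtain ⟨a, b, hab⟩ := exists_eq_smul_add_smul_of_finrank_le_two (by omega)
    (mem_ker x hx) (mem_ker y hy) hxy (mem_ker c hc)
  exact ⟨a, b, fun u hu => (congrFun hab ⟨u, hu⟩).symm⟩

end Dependences

theorem stmt_4_general
    (n : ℕ)
    (S V1 V2 V3 : Finset (Fin (2 * n) → ℝ))
    (hScard : S.card = n + 2)
    (hunion : V1 ∪ V2 ∪ V3 = S)
    (hd12 : Disjoint V1 V2) (hd13 : Disjoint V1 V3) (hd23 : Disjoint V2 V3)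
    (hne1 : V1.Nonempty) (hne2 : V2.Nonempty)
    (hsum1 : ∑ v ∈ V1, v = fun _ => (1 : ℝ))
    (hsum2 : ∑ v ∈ V2, v = fun _ => (1 : ℝ))
    (hsum3 : ∑ v ∈ V3, v = fun _ => (1 : ℝ))
    (hspan : Module.finrank ℝ (Submodule.span ℝ (S : Set (Fin (2 * n) → ℝ))) = n)
    (h23 : V3.card = V2.card) (h12 : V1.card < V2.card)
    : ∀ β : (Fin (2 * n) → ℝ) → ℝ,
      (∀ u ∈ V1, β u = 0) → (∀ u ∈ V2, β u = 1) → (∀ u ∈ V3, β u = -1) →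
      (∑ u ∈ S, β u = 0 ∧ ∑ u ∈ S, β u • u = 0 ∧
        ∀ c : (Fin (2 * n) → ℝ) → ℝ, ∑ u ∈ S, c u = 0 → ∑ u ∈ S, c u • u = 0 →
          ∃ t : ℝ, ∀ u ∈ S, c u = t * β u) := by
  classical
  intro β hβ1 hβ2 hβ3
  have hβ {M : Type} [AddCommGroup M] [Module ℝ M] (g : (Fin (2 * n) → ℝ) → M) :=
    sum_smul_eq_sum_sub_sum_of_partition hunion hd12 hd13 hd23 hβ1 hβ2 hβ3 g
  let δ : (Fin (2 * n) → ℝ) → ℝ := fun u => if u ∈ V1 then 1 else if u ∈ V2 then -1 else 0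
  have hδ {M : Type} [AddCommGroup M] [Module ℝ M] (g : (Fin (2 * n) → ℝ) → M) :=
    sum_smul_eq_sum_sub_sum_of_partition (S := S) (f := δ)
    (by rw [← hunion]; ac_rfl) hd13.symm hd23.symm hd12
    (fun u hu => by simp [δ, disjoint_right.1 hd13 hu, disjoint_right.1 hd23 hu])
    (fun u hu => by simp [δ, hu]) (fun u hu => by simp [δ, hu, disjoint_right.1 hd12 hu]) g
  have hβsum : ∑ u ∈ S, β u = 0 := by simpa [h23] using hβ fun _ => (1 : ℝ)
  have hβvec : ∑ u ∈ S, β u • u = 0 := by simpa [hsum2, hsum3] using hβ id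
  have hδsum : ∑ u ∈ S, δ u = V1.card - V2.card := by simpa using hδ fun _ => (1 : ℝ)
  have hδvec : ∑ u ∈ S, δ u • u = 0 := by simpa [hsum1, hsum2] using hδ id
  refine ⟨hβsum, hβvec, fun c hc hcvec => ?_⟩
  obtain ⟨u1, hu1⟩ := hne1
  obtain ⟨u2, hu2⟩ := hne2
  have hindep : LinearIndependent ℝ ![fun u : S => β u, fun u : S => δ u] :=
    linearIndependent_pair_of_apply_eq_zero (i := ⟨u1, by simp [← hunion, hu1]⟩)
      (j := ⟨u2, by simp [← hunion, hu2]⟩) (hβ1 u1 hu1) (by simp [δ, hu1]) (by simp [hβ2 u2 hu2])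
  obtain ⟨a, b, hab⟩ :=
    S.exists_eq_mul_add_mul_of_sum_smul_eq_zero (by omega) hβvec hδvec hcvec hindep
  have hb : b * (V1.card - V2.card) = 0 := by
    rw [← hδsum, ← hc, sum_congr rfl hab, sum_add_distrib, ← mul_sum, ← mul_sum, hβsum,
      mul_zero, zero_add]
  have hb0 : b = 0 := (mul_eq_zero.1 hb).resolve_right (sub_ne_zero.2 (by exact_mod_cast h12.ne))
  exact ⟨a, fun u hu => by simp [hab u hu, hb0]⟩

theorem stmt_4
    (n : ℕ) (hn : 0 < n)
    (S V1 V2 V3 : Finset (Fin (2 * n) → ℝ))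
    (h01 : ∀ v ∈ S, ∀ i, v i = 0 ∨ v i = 1)
    (hScard : S.card = n + 2)
    (hunion : V1 ∪ V2 ∪ V3 = S)
    (hd12 : Disjoint V1 V2) (hd13 : Disjoint V1 V3) (hd23 : Disjoint V2 V3)
    (hne1 : V1.Nonempty) (hne2 : V2.Nonempty) (hne3 : V3.Nonempty)
    (hsum1 : ∑ v ∈ V1, v = fun _ => (1 : ℝ))
    (hsum2 : ∑ v ∈ V2, v = fun _ => (1 : ℝ))
    (hsum3 : ∑ v ∈ V3, v = fun _ => (1 : ℝ))
    (hspan : Module.finrank ℝ (Submodule.span ℝ (S : Set (Fin (2 * n) → ℝ))) = n)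
    (h23 : V3.card = V2.card) (h12 : V1.card < V2.card)
    : ∀ β : (Fin (2 * n) → ℝ) → ℝ,
      (∀ u ∈ V1, β u = 0) → (∀ u ∈ V2, β u = 1) → (∀ u ∈ V3, β u = -1) →
      (∑ u ∈ S, β u = 0 ∧ ∑ u ∈ S, β u • u = 0 ∧
        ∀ c : (Fin (2 * n) → ℝ) → ℝ, ∑ u ∈ S, c u = 0 → ∑ u ∈ S, c u • u = 0 →
          ∃ t : ℝ, ∀ u ∈ S, c u = t * β u) :=
  stmt_4_general n S V1 V2 V3 hScard hunion hd12 hd13 hd23 hne1 hne2 hsum1 hsum2 hsum3 hspan h23 h12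
end

section
/- (Face characterization, case m₃ > m₂ > m₁ ≥ 2) Assume m₃ > m₂ > m₁ ≥ 2. Then for every nonempty subset F ⊆ S, the convex hull of F is an extreme subset of the convex hull of S with F ≠ S if and only if V₂ ⊄ F and V₁ ∪ V₃ ⊄ F. -/
/-!
As `#S = n + 2` and `span S` has dimension `n`, the linear dependencies among the points of `S` form
a plane. It contains `𝟙_{V₂} - 𝟙_{V₁}`, whose coefficients sum to `m₂ - m₁ ≠ 0`, so the affine
dependencies form a line, spanned by the weight `D` equal to `m₃ - m₂`, `m₁ - m₃`, `m₂ - m₁` on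
`V₁`, `V₂`, `V₃`. Thus `D < 0` exactly on `V₂` and `D > 0` exactly on `V₁ ∪ V₃`, and normalizing
either side of `D` gives the same point of `conv V₂ ∩ conv (V₁ ∪ V₃)`. Every point of `S` is a
vertex, since it shares the sign of `D` with another point of its `Vᵢ`. A face containing one side
contains that common point, hence the other side, hence all of `S`. Conversely, if `F` misses a
point of each side, a segment of `conv S` through `conv F` yields an affine dependency that is
nonnegative off `F`; being a multiple of `D`, it vanishes off `F`, so the segment lies in `conv F`.
-/

open Finset Module Submodule LinearMap

def IsAffineDependency {𝕜 E : Type*} [Semiring 𝕜] [AddCommMonoid E] [Module 𝕜 E]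
    (S : Finset E) (c : E → 𝕜) : Prop :=
  ∑ v ∈ S, c v • v = 0 ∧ ∑ v ∈ S, c v = 0

def SpansAffineDependencies {𝕜 E : Type*} [Semiring 𝕜] [AddCommMonoid E] [Module 𝕜 E]
    (S : Finset E) (D : E → 𝕜) : Prop :=
  IsAffineDependency S D ∧ ∀ c, IsAffineDependency S c → ∃ t, ∀ v ∈ S, c v = t * D v

theorem Finset.sum_filter_pos_add_sum_filter_neg {α R M : Type*} [LinearOrder R] [Zero R]
    [AddCommMonoid M] {S : Finset α} (D : α → R) {f : α → M} (hf : ∀ v ∈ S, D v = 0 → f v = 0) :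
    ∑ v ∈ S with 0 < D v, f v + ∑ v ∈ S with D v < 0, f v = ∑ v ∈ S, f v := by
  rw [← sum_filter_add_sum_filter_not S (fun v => 0 < D v)]
  congr 1
  refine sum_subset (fun v hv => ?_) fun v hv hv' => ?_
  · rw [mem_filter] at hv ⊢
    exact ⟨hv.1, hv.2.not_gt⟩
  · rw [mem_filter] at hv hv'
    exact hf v hv.1 (le_antisymm (not_lt.1 hv.2) (not_lt.1 fun h => hv' ⟨hv.1, h⟩))

section Field

variable {𝕜 E : Type*} [Field 𝕜] [AddCommGroup E] [Module 𝕜 E] {S : Finset E} {D : E → 𝕜}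

theorem spansAffineDependencies_of_finrank {k : ℕ} (hcard : #S = k + 2)
    (hspan : finrank 𝕜 (span 𝕜 (S : Set E)) = k) {d : E → 𝕜} (hd : ∑ v ∈ S, d v • v = 0)
    (hd_sum : ∑ v ∈ S, d v ≠ 0) (hD : IsAffineDependency S D) (hD0 : ∃ v ∈ S, D v ≠ 0) :
    SpansAffineDependencies S D := by
  let φ : (S → 𝕜) →ₗ[𝕜] E := Fintype.linearCombination 𝕜 ((↑) : S → E)
  let σ : (S → 𝕜) →ₗ[𝕜] 𝕜 := Fintype.linearCombination 𝕜 fun _ => 1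
  have hφ (c : E → 𝕜) : φ (fun s => c s) = ∑ v ∈ S, c v • v :=
    sum_coe_sort S fun v => c v • v
  have hσ (c : E → 𝕜) : σ (fun s => c s) = ∑ v ∈ S, c v := by
    simpa [σ, Fintype.linearCombination_apply] using sum_coe_sort S c
  have hmem (c : E → 𝕜) (hc : IsAffineDependency S c) : (fun s : S => c s) ∈ ker φ ⊓ ker σ :=
    ⟨(hφ c).trans hc.1, (hσ c).trans hc.2⟩
  have hker : finrank 𝕜 (ker φ) = 2 := by
    have := φ.finrank_range_add_finrank_ker
    rw [Fintype.range_linearCombination, Subtype.range_coe_subtype, Finset.setOfPred_mem, hspan,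
      finrank_fintype_fun_eq_card, Fintype.card_coe, hcard] at this
    omega
  have hlt : finrank 𝕜 ↥(ker φ ⊓ ker σ) < 2 :=
    hker ▸ finrank_lt_finrank_of_lt (inf_le_left.lt_of_ne fun h =>
      hd_sum ((hσ d).symm.trans (h.ge ((hφ d).trans hd)).2))
  obtain ⟨v, hv, hDv⟩ := hD0
  have hD' : (fun s : S => D s) ≠ 0 := fun h => hDv (congrFun h ⟨v, hv⟩)
  have hspanD : span 𝕜 {fun s : S => D s} = ker φ ⊓ ker σ :=
    eq_of_le_of_finrank_le ((span_singleton_le_iff_mem _ _).2 (hmem D hD))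
      (by rw [finrank_span_singleton hD']; omega)
  refine ⟨hD, fun c hc => ?_⟩
  obtain ⟨t, ht⟩ := mem_span_singleton.1 (hspanD ▸ hmem c hc)
  exact ⟨t, fun v hv => (congrFun ht ⟨v, hv⟩).symm⟩

theorem SpansAffineDependencies.neg (h : SpansAffineDependencies S D) :
    SpansAffineDependencies S (-D) := by
  refine ⟨⟨?_, ?_⟩, fun c hc => ?_⟩
  · simp only [Pi.neg_apply, neg_smul, sum_neg_distrib, h.1.1, neg_zero]
  · simp only [Pi.neg_apply, sum_neg_distrib, h.1.2, neg_zero]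
  obtain ⟨t, ht⟩ := h.2 c hc
  exact ⟨-t, fun v hv => by rw [ht v hv, Pi.neg_apply, neg_mul_neg]⟩

variable [LinearOrder 𝕜]

theorem IsAffineDependency.centerMass_filter_pos (hD : IsAffineDependency S D) :
    {v ∈ S | 0 < D v}.centerMass D id = {v ∈ S | D v < 0}.centerMass D id :=
  centerMass_of_sum_add_sum_eq_zero
    ((sum_filter_pos_add_sum_filter_neg D fun _ _ h => h).trans hD.2)
    ((sum_filter_pos_add_sum_filter_neg D fun _ _ h => by rw [h, zero_smul]).trans hD.1)

variable [IsStrictOrderedRing 𝕜] {F : Finset E}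

theorem IsExtreme.mem_of_centerMass_mem {A B : Set E} (hAB : IsExtreme 𝕜 A B)
    (hA : Convex 𝕜 A) {ι : Type*} {t : Finset ι} {w : ι → 𝕜} {z : ι → E}
    (hw : ∀ i ∈ t, 0 < w i) (hz : ∀ i ∈ t, z i ∈ A) (hx : t.centerMass w z ∈ B) {i : ι}
    (hi : i ∈ t) : z i ∈ B := by
  classical
  rcases (t.erase i).eq_empty_or_nonempty with h | h
  · obtain rfl | rfl := (erase_eq_empty_iff _ _).1 h
    · simp at hi
    · rwa [centerMass_singleton _ _ (hw i hi).ne'] at hx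
  have hr : 0 < ∑ j ∈ t.erase i, w j := sum_pos (fun j hj => hw j (mem_of_mem_erase hj)) h
  have hc : (t.erase i).centerMass w z ∈ A := hA.centerMass_mem
    (fun j hj => (hw j (mem_of_mem_erase hj)).le) hr (fun j hj => hz j (mem_of_mem_erase hj))
  rw [← insert_erase hi, centerMass_insert i _ z (notMem_erase i t) hr.ne'] at hx
  have hwi := hw i hi
  refine hAB.left_mem_of_mem_openSegment (hz i hi) hc hx
    ⟨_, _, by positivity, by positivity, ?_, rfl⟩
  field_simp

theorem sum_smul_mem_convexHull_of_eq_zero (hFS : F ⊆ S) {w : E → 𝕜}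
    (hw0 : ∀ v ∈ S, 0 ≤ w v) (hw1 : ∑ v ∈ S, w v = 1) (hzero : ∀ v ∈ S, v ∉ F → w v = 0) :
    ∑ v ∈ S, w v • v ∈ convexHull 𝕜 (F : Set E) := by
  refine mem_convexHull'.2 ⟨w, fun v hv => hw0 v (hFS hv), ?_, ?_⟩
  · rwa [sum_subset hFS hzero]
  · exact sum_subset hFS fun v hv hvF => by rw [hzero v hv hvF, zero_smul]

theorem SpansAffineDependencies.mem_of_mem_convexHull (h : SpansAffineDependencies S D)
    {s : E} (hs : s ∈ S) (hpair : ∃ v ∈ S, v ≠ s ∧ 0 < D v * D s) (hFS : F ⊆ S)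
    (hsF : s ∈ convexHull 𝕜 (F : Set E)) : s ∈ F := by
  classical
  by_contra hs'
  obtain ⟨w, hw0, hw1, hws⟩ := mem_convexHull'.1 hsF
  let c : E → 𝕜 := fun v => (if v ∈ F then w v else 0) - if v = s then 1 else 0
  have hc : IsAffineDependency S c := by
    constructor
    · simp only [c, sub_smul, sum_sub_distrib, ite_smul, zero_smul, one_smul]
      rw [sum_ite_mem, inter_eq_right.2 hFS, hws, sum_ite_eq' S s fun v => v, if_pos hs, sub_self]
    · simp only [c, sum_sub_distrib]
      rw [sum_ite_mem, inter_eq_right.2 hFS, hw1, sum_ite_eq', if_pos hs, sub_self]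
  -- `c` is negative only at `s`, whereas `D` has the same sign at `s` and at `v`
  obtain ⟨t, ht⟩ := h.2 c hc
  obtain ⟨v, hv, hvs, hDv⟩ := hpair
  have h1 : t * D s = -1 := by rw [← ht s hs]; simp [c, hs']
  have h2 : 0 ≤ t * D v := by
    rw [← ht v hv]
    simp only [c, if_neg hvs, sub_zero]
    split_ifs with h
    exacts [hw0 v h, le_rfl]
  have ht0 : t ≠ 0 := by rintro rfl; simp at h1
  nlinarith [mul_pos (mul_self_pos.2 ht0) hDv]

theorem SpansAffineDependencies.eq_zero_of_nonneg (h : SpansAffineDependencies S D)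
    (hP : ∃ v ∈ S, v ∉ F ∧ 0 < D v) (hN : ∃ v ∈ S, v ∉ F ∧ D v < 0) {c : E → 𝕜}
    (hc : IsAffineDependency S c) (hnn : ∀ v ∈ S, v ∉ F → 0 ≤ c v) :
    ∀ v ∈ S, v ∉ F → c v = 0 := by
  obtain ⟨t, ht⟩ := h.2 c hc
  obtain ⟨p, hpS, hpF, hp⟩ := hP
  obtain ⟨q, hqS, hqF, hq⟩ := hN
  have ht0 : t = 0 := le_antisymm (nonpos_of_mul_nonneg_left (ht q hqS ▸ hnn q hqS hqF) hq)
    (nonneg_of_mul_nonneg_left (ht p hpS ▸ hnn p hpS hpF) hp)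
  intro v hv _
  rw [ht v hv, ht0, zero_mul]

theorem SpansAffineDependencies.isExtreme_convexHull (h : SpansAffineDependencies S D)
    (hFS : F ⊆ S) (hP : ∃ v ∈ S, v ∉ F ∧ 0 < D v) (hN : ∃ v ∈ S, v ∉ F ∧ D v < 0) :
    IsExtreme 𝕜 (convexHull 𝕜 (S : Set E)) (convexHull 𝕜 (F : Set E)) := by
  classical
  refine ⟨convexHull_mono (coe_subset.2 hFS), fun a ha b hb x hx ⟨θ, η, hθ, hη, hθη, hab⟩ => ?_⟩
  obtain ⟨α, hα0, hα1, rfl⟩ := mem_convexHull'.1 ha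
  obtain ⟨β, hβ0, hβ1, rfl⟩ := mem_convexHull'.1 hb
  obtain ⟨f, -, hf1, hfx⟩ := mem_convexHull'.1 hx
  let c : E → 𝕜 := fun v => θ * α v + η * β v - if v ∈ F then f v else 0
  have hc : IsAffineDependency S c := by
    constructor
    · simp only [c, sub_smul, add_smul, sum_sub_distrib, sum_add_distrib, mul_smul, ite_smul,
        zero_smul, ← smul_sum]
      rw [sum_ite_mem, inter_eq_right.2 hFS, hfx, hab, sub_self]
    · simp only [c, sum_sub_distrib, sum_add_distrib, ← mul_sum]
      rw [hα1, hβ1, sum_ite_mem, inter_eq_right.2 hFS, hf1, mul_one, mul_one, hθη, sub_self]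
  have hθα (v) (hv : v ∈ S) : 0 ≤ θ * α v := mul_nonneg hθ.le (hα0 v hv)
  have hηβ (v) (hv : v ∈ S) : 0 ≤ η * β v := mul_nonneg hη.le (hβ0 v hv)
  have hc0 := h.eq_zero_of_nonneg hP hN hc fun v hv hvF => by
    simpa only [c, if_neg hvF, sub_zero] using add_nonneg (hθα v hv) (hηβ v hv)
  refine sum_smul_mem_convexHull_of_eq_zero hFS hα0 hα1 fun v hv hvF => ?_
  have hv0 := hc0 v hv hvF
  simp only [c, if_neg hvF, sub_zero] at hv0
  exact (mul_eq_zero.1 ((add_eq_zero_iff_of_nonneg (hθα v hv) (hηβ v hv)).1 hv0).1).resolve_left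
    hθ.ne'

theorem IsAffineDependency.filter_pos_subset_of_isExtreme (hD : IsAffineDependency S D)
    (hF : IsExtreme 𝕜 (convexHull 𝕜 (S : Set E)) (convexHull 𝕜 (F : Set E)))
    (hvert : ∀ v ∈ S, v ∈ convexHull 𝕜 (F : Set E) → v ∈ F) (hN : {v ∈ S | D v < 0} ⊆ F) :
    {v ∈ S | 0 < D v} ⊆ F := by
  intro s hs
  refine hvert s (mem_filter.1 hs).1 (hF.mem_of_centerMass_mem (convex_convexHull 𝕜 _) (z := id)
    (fun v hv => (mem_filter.1 hv).2) (fun v hv => subset_convexHull 𝕜 _ (mem_filter.1 hv).1)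
    ?_ hs)
  have hsum : ∑ v ∈ S with D v < 0, D v < 0 := by
    rw [eq_neg_of_add_eq_zero_right
      ((sum_filter_pos_add_sum_filter_neg D fun _ _ h => h).trans hD.2), neg_lt_zero]
    exact sum_pos (fun v hv => (mem_filter.1 hv).2) ⟨s, hs⟩
  rw [hD.centerMass_filter_pos]
  exact convexHull_mono (coe_subset.2 hN)
    (centerMass_id_mem_convexHull_of_nonpos _ (fun v hv => (mem_filter.1 hv).2.le) hsum)

theorem SpansAffineDependencies.isExtreme_convexHull_and_ne_iff
    (h : SpansAffineDependencies S D) (hpair : ∀ s ∈ S, ∃ v ∈ S, v ≠ s ∧ 0 < D v * D s)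
    (hFS : F ⊆ S) :
    IsExtreme 𝕜 (convexHull 𝕜 (S : Set E)) (convexHull 𝕜 (F : Set E)) ∧ F ≠ S ↔
      ¬{v ∈ S | D v < 0} ⊆ F ∧ ¬{v ∈ S | 0 < D v} ⊆ F := by
  constructor
  · rintro ⟨hext, hne⟩
    have hvert (v) (hv : v ∈ S) := h.mem_of_mem_convexHull hv (hpair v hv) hFS
    have hcover (hN : {v ∈ S | D v < 0} ⊆ F) (hP : {v ∈ S | 0 < D v} ⊆ F) : F = S := by
      refine hFS.antisymm fun v hv => ?_
      obtain ⟨w, -, -, hD⟩ := hpair v hv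
      rcases (right_ne_zero_of_mul hD.ne').lt_or_gt with hDv | hDv
      exacts [hN (mem_filter.2 ⟨hv, hDv⟩), hP (mem_filter.2 ⟨hv, hDv⟩)]
    refine ⟨fun hN => hne (hcover hN (h.1.filter_pos_subset_of_isExtreme hext hvert hN)),
      fun hP => hne (hcover ?_ hP)⟩
    simpa only [Pi.neg_apply, neg_pos, neg_lt_zero] using
      h.neg.1.filter_pos_subset_of_isExtreme hext hvert (by simpa only [Pi.neg_apply, neg_lt_zero])
  · rintro ⟨hN, hP⟩
    obtain ⟨p, hp, hpF⟩ := not_subset.1 hP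
    obtain ⟨q, hq, hqF⟩ := not_subset.1 hN
    rw [mem_filter] at hp hq
    refine ⟨h.isExtreme_convexHull hFS ⟨p, hp.1, hpF, hp.2⟩ ⟨q, hq.1, hqF, hq.2⟩, ?_⟩
    rintro rfl
    exact hN (filter_subset _ _)

end Field

section Partition

variable {α : Type*} [DecidableEq α] {S V₁ V₂ V₃ : Finset α}

theorem Finset.sum_eq_of_union_union_eq {M : Type*} [AddCommMonoid M] (hunion : V₁ ∪ V₂ ∪ V₃ = S)
    (hd₁₂ : Disjoint V₁ V₂) (hd₁₃ : Disjoint V₁ V₃) (hd₂₃ : Disjoint V₂ V₃) (f : α → M) :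
    ∑ v ∈ S, f v = ∑ v ∈ V₁, f v + ∑ v ∈ V₂, f v + ∑ v ∈ V₃, f v := by
  rw [← hunion, sum_union (disjoint_union_left.2 ⟨hd₁₃, hd₂₃⟩), sum_union hd₁₂]

variable {R : Type*} {a₁ a₂ a₃ : R} {v : α}

def weightOnParts (V₁ V₂ : Finset α) (a₁ a₂ a₃ : R) (v : α) : R :=
  if v ∈ V₁ then a₁ else if v ∈ V₂ then a₂ else a₃

theorem weightOnParts_of_mem₁ (hv : v ∈ V₁) : weightOnParts V₁ V₂ a₁ a₂ a₃ v = a₁ :=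
  if_pos hv

theorem weightOnParts_of_mem₂ (hd₁₂ : Disjoint V₁ V₂) (hv : v ∈ V₂) :
    weightOnParts V₁ V₂ a₁ a₂ a₃ v = a₂ := by
  simp [weightOnParts, hv, disjoint_right.1 hd₁₂ hv]

theorem weightOnParts_of_mem₃ (hd₁₃ : Disjoint V₁ V₃) (hd₂₃ : Disjoint V₂ V₃) (hv : v ∈ V₃) :
    weightOnParts V₁ V₂ a₁ a₂ a₃ v = a₃ := by
  simp [weightOnParts, disjoint_right.1 hd₁₃ hv, disjoint_right.1 hd₂₃ hv]

theorem sum_weightOnParts [CommSemiring R] (hunion : V₁ ∪ V₂ ∪ V₃ = S) (hd₁₂ : Disjoint V₁ V₂)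
    (hd₁₃ : Disjoint V₁ V₃) (hd₂₃ : Disjoint V₂ V₃) :
    ∑ v ∈ S, weightOnParts V₁ V₂ a₁ a₂ a₃ v = a₁ * #V₁ + a₂ * #V₂ + a₃ * #V₃ := by
  rw [sum_eq_of_union_union_eq hunion hd₁₂ hd₁₃ hd₂₃,
    sum_congr rfl fun v hv => weightOnParts_of_mem₁ hv,
    sum_congr rfl fun v hv => weightOnParts_of_mem₂ hd₁₂ hv,
    sum_congr rfl fun v hv => weightOnParts_of_mem₃ hd₁₃ hd₂₃ hv]
  simp only [sum_const, nsmul_eq_mul, mul_comm]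

theorem sum_weightOnParts_smul [Semiring R] [AddCommMonoid α] [Module R α]
    (hunion : V₁ ∪ V₂ ∪ V₃ = S) (hd₁₂ : Disjoint V₁ V₂) (hd₁₃ : Disjoint V₁ V₃)
    (hd₂₃ : Disjoint V₂ V₃) {u : α} (hsum₁ : ∑ v ∈ V₁, v = u) (hsum₂ : ∑ v ∈ V₂, v = u)
    (hsum₃ : ∑ v ∈ V₃, v = u) :
    ∑ v ∈ S, weightOnParts V₁ V₂ a₁ a₂ a₃ v • v = (a₁ + a₂ + a₃) • u := by
  rw [sum_eq_of_union_union_eq hunion hd₁₂ hd₁₃ hd₂₃, add_smul, add_smul]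
  congr 1; congr 1
  · rw [← hsum₁, smul_sum]
    exact sum_congr rfl fun v hv => by rw [weightOnParts_of_mem₁ hv]
  · rw [← hsum₂, smul_sum]
    exact sum_congr rfl fun v hv => by rw [weightOnParts_of_mem₂ hd₁₂ hv]
  · rw [← hsum₃, smul_sum]
    exact sum_congr rfl fun v hv => by rw [weightOnParts_of_mem₃ hd₁₃ hd₂₃ hv]

theorem exists_ne_mul_weightOnParts_pos [Ring R] [LinearOrder R] [IsStrictOrderedRing R]
    (hunion : V₁ ∪ V₂ ∪ V₃ = S) (hd₁₂ : Disjoint V₁ V₂) (hd₁₃ : Disjoint V₁ V₃)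
    (hd₂₃ : Disjoint V₂ V₃) (h₁ : a₁ ≠ 0) (h₂ : a₂ ≠ 0) (h₃ : a₃ ≠ 0)
    (hc₁ : 1 < #V₁) (hc₂ : 1 < #V₂) (hc₃ : 1 < #V₃) {s : α} (hs : s ∈ S) :
    ∃ v ∈ S, v ≠ s ∧ 0 < weightOnParts V₁ V₂ a₁ a₂ a₃ v * weightOnParts V₁ V₂ a₁ a₂ a₃ s := by
  subst hunion
  rcases mem_union.1 hs with hs | hs
  · rcases mem_union.1 hs with hs | hs
    · obtain ⟨v, hv, hvs⟩ := exists_mem_ne hc₁ s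
      refine ⟨v, mem_union_left _ (mem_union_left _ hv), hvs, ?_⟩
      rw [weightOnParts_of_mem₁ hv, weightOnParts_of_mem₁ hs]
      exact mul_self_pos.2 h₁
    · obtain ⟨v, hv, hvs⟩ := exists_mem_ne hc₂ s
      refine ⟨v, mem_union_left _ (mem_union_right _ hv), hvs, ?_⟩
      rw [weightOnParts_of_mem₂ hd₁₂ hv, weightOnParts_of_mem₂ hd₁₂ hs]
      exact mul_self_pos.2 h₂
  · obtain ⟨v, hv, hvs⟩ := exists_mem_ne hc₃ s
    refine ⟨v, mem_union_right _ hv, hvs, ?_⟩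
    rw [weightOnParts_of_mem₃ hd₁₃ hd₂₃ hv, weightOnParts_of_mem₃ hd₁₃ hd₂₃ hs]
    exact mul_self_pos.2 h₃

theorem filter_weightOnParts_neg [LinearOrder R] [Zero R] (hunion : V₁ ∪ V₂ ∪ V₃ = S)
    (hd₁₂ : Disjoint V₁ V₂) (hd₁₃ : Disjoint V₁ V₃) (hd₂₃ : Disjoint V₂ V₃)
    (h₁ : 0 ≤ a₁) (h₂ : a₂ < 0) (h₃ : 0 ≤ a₃) :
    {v ∈ S | weightOnParts V₁ V₂ a₁ a₂ a₃ v < 0} = V₂ := by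
  subst hunion
  ext v
  simp only [mem_filter, mem_union]
  constructor
  · rintro ⟨(hv | hv) | hv, hneg⟩
    · exact absurd hneg (by rw [weightOnParts_of_mem₁ hv]; exact h₁.not_gt)
    · exact hv
    · exact absurd hneg (by rw [weightOnParts_of_mem₃ hd₁₃ hd₂₃ hv]; exact h₃.not_gt)
  · exact fun hv => ⟨Or.inl (Or.inr hv), (weightOnParts_of_mem₂ hd₁₂ hv).symm ▸ h₂⟩

theorem filter_weightOnParts_pos [LinearOrder R] [Zero R] (hunion : V₁ ∪ V₂ ∪ V₃ = S)
    (hd₁₂ : Disjoint V₁ V₂) (hd₁₃ : Disjoint V₁ V₃) (hd₂₃ : Disjoint V₂ V₃)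
    (h₁ : 0 < a₁) (h₂ : a₂ ≤ 0) (h₃ : 0 < a₃) :
    {v ∈ S | 0 < weightOnParts V₁ V₂ a₁ a₂ a₃ v} = V₁ ∪ V₃ := by
  subst hunion
  ext v
  simp only [mem_filter, mem_union]
  constructor
  · rintro ⟨(hv | hv) | hv, hpos⟩
    · exact Or.inl hv
    · exact absurd hpos (by rw [weightOnParts_of_mem₂ hd₁₂ hv]; exact h₂.not_gt)
    · exact Or.inr hv
  · rintro (hv | hv)
    · exact ⟨Or.inl (Or.inl hv), (weightOnParts_of_mem₁ hv).symm ▸ h₁⟩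
    · exact ⟨Or.inr hv, (weightOnParts_of_mem₃ hd₁₃ hd₂₃ hv).symm ▸ h₃⟩

end Partition

theorem stmt_6_general
    (n : ℕ)
    (S V1 V2 V3 : Finset (Fin (2 * n) → ℝ))
    (hScard : S.card = n + 2)
    (hunion : V1 ∪ V2 ∪ V3 = S)
    (hd12 : Disjoint V1 V2) (hd13 : Disjoint V1 V3) (hd23 : Disjoint V2 V3)
    (hsum1 : ∑ v ∈ V1, v = fun _ => (1 : ℝ))
    (hsum2 : ∑ v ∈ V2, v = fun _ => (1 : ℝ))
    (hsum3 : ∑ v ∈ V3, v = fun _ => (1 : ℝ))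
    (hspan : Module.finrank ℝ (Submodule.span ℝ (S : Set (Fin (2 * n) → ℝ))) = n)
    (hm1 : 2 ≤ V1.card) (h12 : V1.card < V2.card) (h23 : V2.card < V3.card)
    : ∀ F ⊆ S, F.Nonempty →
      ((IsExtreme ℝ (convexHull ℝ (S : Set (Fin (2 * n) → ℝ)))
          (convexHull ℝ (F : Set (Fin (2 * n) → ℝ))) ∧ F ≠ S) ↔
        (¬ V2 ⊆ F ∧ ¬ V1 ∪ V3 ⊆ F)) := by
  intro F hFS _
  have h₁ : (0 : ℝ) < #V3 - #V2 := sub_pos.2 (mod_cast h23)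
  have h₂ : (#V1 : ℝ) - #V3 < 0 := sub_neg.2 (mod_cast h12.trans h23)
  have h₃ : (0 : ℝ) < #V2 - #V1 := sub_pos.2 (mod_cast h12)
  set D := weightOnParts V1 V2 ((#V3 : ℝ) - #V2) (#V1 - #V3) (#V2 - #V1)
  have hD : IsAffineDependency S D := by
    constructor
    · rw [sum_weightOnParts_smul hunion hd12 hd13 hd23 hsum1 hsum2 hsum3, sub_add_sub_cancel',
        sub_add_sub_cancel, sub_self, zero_smul]
    · rw [sum_weightOnParts hunion hd12 hd13 hd23]
      ring
  obtain ⟨v, hv⟩ := card_pos.1 (by omega : 0 < #V1)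
  have hspans : SpansAffineDependencies S D :=
    spansAffineDependencies_of_finrank hScard hspan (d := weightOnParts V1 V2 (-1) 1 0)
      (by rw [sum_weightOnParts_smul hunion hd12 hd13 hd23 hsum1 hsum2 hsum3]; simp)
      (by rw [sum_weightOnParts hunion hd12 hd13 hd23]; linarith) hD
      ⟨v, hunion ▸ mem_union_left _ (mem_union_left _ hv),
        (weightOnParts_of_mem₁ hv).trans_ne h₁.ne'⟩
  rw [hspans.isExtreme_convexHull_and_ne_iff (fun s hs => exists_ne_mul_weightOnParts_pos hunion
    hd12 hd13 hd23 h₁.ne' h₂.ne h₃.ne' (by omega) (by omega) (by omega) hs) hFS,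
    filter_weightOnParts_neg hunion hd12 hd13 hd23 h₁.le h₂ h₃.le,
    filter_weightOnParts_pos hunion hd12 hd13 hd23 h₁ h₂.le h₃]

theorem stmt_6
    (n : ℕ) (hn : 0 < n)
    (S V1 V2 V3 : Finset (Fin (2 * n) → ℝ))
    (h01 : ∀ v ∈ S, ∀ i, v i = 0 ∨ v i = 1)
    (hScard : S.card = n + 2)
    (hunion : V1 ∪ V2 ∪ V3 = S)
    (hd12 : Disjoint V1 V2) (hd13 : Disjoint V1 V3) (hd23 : Disjoint V2 V3)
    (hne1 : V1.Nonempty) (hne2 : V2.Nonempty) (hne3 : V3.Nonempty)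
    (hsum1 : ∑ v ∈ V1, v = fun _ => (1 : ℝ))
    (hsum2 : ∑ v ∈ V2, v = fun _ => (1 : ℝ))
    (hsum3 : ∑ v ∈ V3, v = fun _ => (1 : ℝ))
    (hspan : Module.finrank ℝ (Submodule.span ℝ (S : Set (Fin (2 * n) → ℝ))) = n)
    (hm1 : 2 ≤ V1.card) (h12 : V1.card < V2.card) (h23 : V2.card < V3.card)
    : ∀ F ⊆ S, F.Nonempty →
      ((IsExtreme ℝ (convexHull ℝ (S : Set (Fin (2 * n) → ℝ)))
          (convexHull ℝ (F : Set (Fin (2 * n) → ℝ))) ∧ F ≠ S) ↔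
        (¬ V2 ⊆ F ∧ ¬ V1 ∪ V3 ⊆ F)) :=
  stmt_6_general n S V1 V2 V3 hScard hunion hd12 hd13 hd23 hsum1 hsum2 hsum3 hspan hm1 h12 h23
end

section
/- (Simpliciality, case m₃ > m₂ > m₁ ≥ 2) Assume m₃ > m₂ > m₁ ≥ 2. Then conv(S) is a simplicial polytope: for every nonempty subset F ⊆ S with F ≠ S such that the convex hull of F is an extreme subset of the convex hull of S, the set F is affinely independent. -/
open Finset Module Submodule

/-!
The barycentre `(#Vᵢ)⁻¹ • 𝟙` of each block lies on the ray through `𝟙`, the middle one strictly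
between the other two. A face of `conv S` that contains the barycentre of a block contains the
whole block, because `0/1`-vectors are vertices of the cube. Hence a proper face `F` contains
neither the middle block nor both outer blocks, so it misses a vertex `x` of one block and a
vertex `y` of another. As every block sums to `𝟙`, both `x` and `y` lie in the span of
`S \ {x, y}`: these `n` vectors span the `n`-dimensional space `span S`, so they are linearly
independent, and so is `F ⊆ S \ {x, y}`.
-/

section Convex

variable {E : Type*} [AddCommGroup E] [Module ℝ E]

theorem IsExtreme.subset_of_centerMass_mem {A B : Set E} (hAB : IsExtreme ℝ A B)
    (hA : Convex ℝ A) {t : Finset E} {w : E → ℝ} (hw : ∀ i ∈ t, 0 < w i) (htA : ↑t ⊆ A)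
    (hc : t.centerMass w id ∈ B) : ↑t ⊆ B := by
  classical
  intro v hv
  rcases (t.erase v).eq_empty_or_nonempty with hempty | hne
  · rwa [← insert_erase (mem_coe.1 hv), hempty, insert_empty,
      centerMass_singleton _ _ (hw v hv).ne'] at hc
  have hs : 0 < ∑ j ∈ t.erase v, w j := sum_pos (fun j hj => hw j (mem_of_mem_erase hj)) hne
  have hq : (t.erase v).centerMass w id ∈ A :=
    hA.centerMass_mem (fun j hj => (hw j (mem_of_mem_erase hj)).le) hs
      (fun j hj => htA (mem_of_mem_erase hj))
  rw [← insert_erase (mem_coe.1 hv), centerMass_insert _ _ _ (notMem_erase v t) hs.ne'] at hc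
  have hv' : 0 < w v := hw v hv
  exact hAB.left_mem_of_mem_openSegment (htA hv) hq hc
    ⟨_, _, by positivity, by positivity, by field_simp, rfl⟩

theorem Finset.centerMass_one_id (t : Finset E) :
    t.centerMass (fun _ => (1 : ℝ)) id = (#t : ℝ)⁻¹ • ∑ v ∈ t, v := by
  simp [centerMass]

theorem inv_smul_mem_openSegment_inv_smul {a b c : ℝ} (ha : 0 < a) (hab : a < b) (hbc : b < c)
    (x : E) : b⁻¹ • x ∈ openSegment ℝ (c⁻¹ • x) (a⁻¹ • x) := by
  have hb : 0 < b := ha.trans hab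
  have hc : 0 < c := hb.trans hbc
  have hmem : b⁻¹ ∈ openSegment ℝ c⁻¹ a⁻¹ := by
    rw [openSegment_eq_Ioo ((inv_lt_inv₀ hc ha).2 (hab.trans hbc))]
    exact ⟨(inv_lt_inv₀ hc hb).2 hbc, (inv_lt_inv₀ hb ha).2 hab⟩
  obtain ⟨s, t, hs, ht, hst, hcomb⟩ := hmem
  exact ⟨s, t, hs, ht, hst, by rw [smul_smul, smul_smul, ← add_smul, ← hcomb, smul_eq_mul,
    smul_eq_mul]⟩

end Convex

section ZeroOne

variable {ι : Type*} {S F : Finset (ι → ℝ)}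

theorem mem_of_mem_convexHull_of_zero_or_one {s : Set (ι → ℝ)}
    (hs : ∀ u ∈ s, ∀ i, u i = 0 ∨ u i = 1) {v : ι → ℝ} (hv : ∀ i, v i = 0 ∨ v i = 1)
    (h : v ∈ convexHull ℝ s) : v ∈ s := by
  have hcube : convexHull ℝ s ⊆ Set.univ.pi fun _ => Set.Icc (0 : ℝ) 1 :=
    convexHull_min (fun u hu i _ => by rcases hs u hu i with h | h <;> simp [h])
      (convex_pi fun _ _ => convex_Icc 0 1)
  have hvertex : v ∈ (Set.univ.pi fun _ => Set.Icc (0 : ℝ) 1).extremePoints ℝ := by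
    rw [extremePoints_pi]
    intro i _
    rw [Set.extremePoints_Icc zero_le_one]
    exact hv i
  exact extremePoints_convexHull_subset
    (inter_extremePoints_subset_extremePoints_of_subset hcube ⟨h, hvertex⟩)

theorem subset_of_centroid_mem_of_isExtreme (h01 : ∀ v ∈ S, ∀ i, v i = 0 ∨ v i = 1)
    (hFS : F ⊆ S) (hext : IsExtreme ℝ (convexHull ℝ (S : Set (ι → ℝ))) (convexHull ℝ ↑F))
    {V : Finset (ι → ℝ)} (hVS : V ⊆ S) (hc : (#V : ℝ)⁻¹ • ∑ v ∈ V, v ∈ convexHull ℝ ↑F) :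
    V ⊆ F := by
  intro v hv
  have hvF : v ∈ convexHull ℝ (F : Set (ι → ℝ)) :=
    hext.subset_of_centerMass_mem (convex_convexHull ℝ _) (w := fun _ => 1)
      (fun _ _ => one_pos) ((coe_subset.2 hVS).trans (subset_convexHull ℝ _))
      (by rwa [centerMass_one_id]) hv
  exact mem_coe.1 <| mem_of_mem_convexHull_of_zero_or_one (fun u hu => h01 u (hFS hu))
    (h01 v (hVS hv)) hvF

theorem not_subset_of_isExtreme [DecidableEq (ι → ℝ)] {V₁ V₂ V₃ : Finset (ι → ℝ)}
    {c : ι → ℝ} (h01 : ∀ v ∈ S, ∀ i, v i = 0 ∨ v i = 1) (hunion : V₁ ∪ V₂ ∪ V₃ = S)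
    (hne₁ : V₁.Nonempty) (hne₂ : V₂.Nonempty) (hne₃ : V₃.Nonempty)
    (hsum₁ : ∑ v ∈ V₁, v = c) (hsum₂ : ∑ v ∈ V₂, v = c) (hsum₃ : ∑ v ∈ V₃, v = c)
    (h₁₂ : #V₁ < #V₂) (h₂₃ : #V₂ < #V₃) (hFS : F ⊆ S) (hF : F ≠ S)
    (hext : IsExtreme ℝ (convexHull ℝ (S : Set (ι → ℝ))) (convexHull ℝ ↑F)) :
    ¬ V₂ ⊆ F ∧ (¬ V₁ ⊆ F ∨ ¬ V₃ ⊆ F) := by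
  have hS₁ : V₁ ⊆ S := hunion ▸ subset_union_left.trans subset_union_left
  have hS₂ : V₂ ⊆ S := hunion ▸ subset_union_right.trans subset_union_left
  have hS₃ : V₃ ⊆ S := hunion ▸ subset_union_right
  have hcentroid {V T : Finset (ι → ℝ)} (hV : V.Nonempty) (hsum : ∑ v ∈ V, v = c) (hVT : V ⊆ T) :
      (#V : ℝ)⁻¹ • c ∈ convexHull ℝ (T : Set (ι → ℝ)) :=
    convexHull_mono (coe_subset.2 hVT) <| hsum ▸ centerMass_one_id V ▸
      V.centerMass_id_mem_convexHull (fun _ _ => zero_le_one) (by simpa using hV)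
  have habsorb {V : Finset (ι → ℝ)} (hsum : ∑ v ∈ V, v = c) (hVS : V ⊆ S)
      (hV : (#V : ℝ)⁻¹ • c ∈ convexHull ℝ (F : Set (ι → ℝ))) : V ⊆ F :=
    subset_of_centroid_mem_of_isExtreme h01 hFS hext hVS (hsum ▸ hV)
  have hall : V₁ ⊆ F → V₂ ⊆ F → V₃ ⊆ F → False := fun h₁ h₂ h₃ =>
    hF (hFS.antisymm (hunion ▸ union_subset (union_subset h₁ h₂) h₃))
  have hseg : (#V₂ : ℝ)⁻¹ • c ∈ openSegment ℝ ((#V₃ : ℝ)⁻¹ • c) ((#V₁ : ℝ)⁻¹ • c) :=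
    inv_smul_mem_openSegment_inv_smul (by exact_mod_cast hne₁.card_pos) (by exact_mod_cast h₁₂)
      (by exact_mod_cast h₂₃) c
  refine ⟨fun h₂ => ?_, not_and_or.1 fun ⟨h₁, h₃⟩ => hall h₁ ?_ h₃⟩
  · have hp₂ := hcentroid hne₂ hsum₂ h₂
    have hp₃ := hcentroid hne₃ hsum₃ hS₃
    have hp₁ := hcentroid hne₁ hsum₁ hS₁
    exact hall (habsorb hsum₁ hS₁ (hext.right_mem_of_mem_openSegment hp₃ hp₁ hp₂ hseg)) h₂
      (habsorb hsum₃ hS₃ (hext.left_mem_of_mem_openSegment hp₃ hp₁ hp₂ hseg))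
  · exact habsorb hsum₂ hS₂ <| (convex_convexHull ℝ _).openSegment_subset
      (hcentroid hne₃ hsum₃ h₃) (hcentroid hne₁ hsum₁ h₁) hseg

end ZeroOne

section LinearAlgebra

variable {K E : Type*} [Field K] [AddCommGroup E] [Module K E] [DecidableEq E]

theorem mem_span_of_sum_eq_sum {T U V : Finset E} {x : E} (hx : x ∈ V) (hVT : V.erase x ⊆ T)
    (hUT : U ⊆ T) (h : ∑ v ∈ V, v = ∑ u ∈ U, u) : x ∈ span K (T : Set E) := by
  have hx' : x = ∑ u ∈ U, u - ∑ v ∈ V.erase x, v := by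
    rw [sum_erase_eq_sub hx, ← h, sub_sub_cancel]
  rw [hx']
  exact sub_mem (sum_mem fun u hu => subset_span (hUT hu))
    (sum_mem fun v hv => subset_span (hVT hv))

theorem linearIndependent_of_not_subset {S F V W U : Finset E} (hVS : V ⊆ S) (hWS : W ⊆ S)
    (hUS : U ⊆ S) (hVW : Disjoint V W) (hVU : Disjoint V U) (hWU : Disjoint W U)
    (hV : ∑ v ∈ V, v = ∑ u ∈ U, u) (hW : ∑ w ∈ W, w = ∑ u ∈ U, u)
    (hrank : #S = finrank K (span K (S : Set E)) + 2) (hFS : F ⊆ S)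
    (hVF : ¬ V ⊆ F) (hWF : ¬ W ⊆ F) : LinearIndependent K ((↑) : F → E) := by
  obtain ⟨x, hxV, hxF⟩ := not_subset.1 hVF
  obtain ⟨y, hyW, hyF⟩ := not_subset.1 hWF
  set T := (S.erase x).erase y
  have hxy : x ≠ y := fun h => disjoint_left.1 hVW hxV (h ▸ hyW)
  have hsub {X : Finset E} (hXS : X ⊆ S) (hx : x ∉ X) (hy : y ∉ X) : X ⊆ T := fun z hz =>
    mem_erase.2 ⟨fun h => hy (h ▸ hz), mem_erase.2 ⟨fun h => hx (h ▸ hz), hXS hz⟩⟩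
  have hUT : U ⊆ T := hsub hUS (disjoint_left.1 hVU hxV) (disjoint_left.1 hWU hyW)
  have hxT : x ∈ span K (T : Set E) := mem_span_of_sum_eq_sum hxV
    (hsub ((erase_subset _ _).trans hVS) (notMem_erase x V)
      fun h => disjoint_left.1 hVW (mem_of_mem_erase h) hyW) hUT hV
  have hyT : y ∈ span K (T : Set E) := mem_span_of_sum_eq_sum hyW
    (hsub ((erase_subset _ _).trans hWS) (fun h => disjoint_left.1 hVW hxV (mem_of_mem_erase h))
      (notMem_erase y W)) hUT hW
  have hspan : span K (T : Set E) = span K (S : Set E) := by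
    refine le_antisymm (span_mono fun z hz => ?_) (span_le.2 fun z hz => ?_)
    · exact mem_of_mem_erase (mem_of_mem_erase hz)
    · by_cases hzx : z = x
      · exact hzx ▸ hxT
      by_cases hzy : z = y
      · exact hzy ▸ hyT
      exact subset_span (mem_erase.2 ⟨hzy, mem_erase.2 ⟨hzx, hz⟩⟩)
  have hT : LinearIndependent K ((↑) : T → E) := by
    refine linearIndependent_iff_card_eq_finrank_span.2 ?_
    rw [Set.finrank, Subtype.range_coe_subtype, setOfPred_mem, hspan, Fintype.card_coe,
      card_erase_of_mem (mem_erase.2 ⟨hxy.symm, hWS hyW⟩), card_erase_of_mem (hVS hxV)]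
    omega
  have hFT : F ⊆ T := hsub hFS hxF hyF
  exact hT.comp (fun z : F => ⟨z, hFT z.2⟩) fun _ _ h => Subtype.ext (Subtype.mk.inj h)

end LinearAlgebra

theorem stmt_7_general
    (n : ℕ)
    (S V1 V2 V3 : Finset (Fin (2 * n) → ℝ))
    (h01 : ∀ v ∈ S, ∀ i, v i = 0 ∨ v i = 1)
    (hScard : S.card = n + 2)
    (hunion : V1 ∪ V2 ∪ V3 = S)
    (hd12 : Disjoint V1 V2) (hd13 : Disjoint V1 V3) (hd23 : Disjoint V2 V3)
    (hne1 : V1.Nonempty) (hne2 : V2.Nonempty) (hne3 : V3.Nonempty)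
    (hsum1 : ∑ v ∈ V1, v = fun _ => (1 : ℝ))
    (hsum2 : ∑ v ∈ V2, v = fun _ => (1 : ℝ))
    (hsum3 : ∑ v ∈ V3, v = fun _ => (1 : ℝ))
    (hspan : Module.finrank ℝ (Submodule.span ℝ (S : Set (Fin (2 * n) → ℝ))) = n)
    (h12 : V1.card < V2.card) (h23 : V2.card < V3.card)
    : ∀ F ⊆ S, F.Nonempty → F ≠ S →
      IsExtreme ℝ (convexHull ℝ (S : Set (Fin (2 * n) → ℝ)))
        (convexHull ℝ (F : Set (Fin (2 * n) → ℝ))) →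
      AffineIndependent ℝ (fun x : {x // x ∈ F} => (x : Fin (2 * n) → ℝ)) := by
  intro F hFS _ hF hext
  obtain ⟨hV2F, hV13F⟩ := not_subset_of_isExtreme h01 hunion hne1 hne2 hne3 hsum1 hsum2 hsum3
    h12 h23 hFS hF hext
  have hS1 : V1 ⊆ S := hunion ▸ subset_union_left.trans subset_union_left
  have hS2 : V2 ⊆ S := hunion ▸ subset_union_right.trans subset_union_left
  have hS3 : V3 ⊆ S := hunion ▸ subset_union_right
  have hrank : #S = finrank ℝ (span ℝ (S : Set (Fin (2 * n) → ℝ))) + 2 := by rw [hScard, hspan]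
  apply LinearIndependent.affineIndependent
  rcases hV13F with hV1F | hV3F
  · exact linearIndependent_of_not_subset hS1 hS2 hS3 hd12 hd13 hd23 (hsum1.trans hsum3.symm)
      (hsum2.trans hsum3.symm) hrank hFS hV1F hV2F
  · exact linearIndependent_of_not_subset hS3 hS2 hS1 hd23.symm hd13.symm hd12.symm
      (hsum3.trans hsum1.symm) (hsum2.trans hsum1.symm) hrank hFS hV3F hV2F

theorem stmt_7
    (n : ℕ) (hn : 0 < n)
    (S V1 V2 V3 : Finset (Fin (2 * n) → ℝ))
    (h01 : ∀ v ∈ S, ∀ i, v i = 0 ∨ v i = 1)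
    (hScard : S.card = n + 2)
    (hunion : V1 ∪ V2 ∪ V3 = S)
    (hd12 : Disjoint V1 V2) (hd13 : Disjoint V1 V3) (hd23 : Disjoint V2 V3)
    (hne1 : V1.Nonempty) (hne2 : V2.Nonempty) (hne3 : V3.Nonempty)
    (hsum1 : ∑ v ∈ V1, v = fun _ => (1 : ℝ))
    (hsum2 : ∑ v ∈ V2, v = fun _ => (1 : ℝ))
    (hsum3 : ∑ v ∈ V3, v = fun _ => (1 : ℝ))
    (hspan : Module.finrank ℝ (Submodule.span ℝ (S : Set (Fin (2 * n) → ℝ))) = n)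
    (hm1 : 2 ≤ V1.card) (h12 : V1.card < V2.card) (h23 : V2.card < V3.card)
    : ∀ F ⊆ S, F.Nonempty → F ≠ S →
      IsExtreme ℝ (convexHull ℝ (S : Set (Fin (2 * n) → ℝ)))
        (convexHull ℝ (F : Set (Fin (2 * n) → ℝ))) →
      AffineIndependent ℝ (fun x : {x // x ∈ F} => (x : Fin (2 * n) → ℝ)) :=
  stmt_7_general n S V1 V2 V3 h01 hScard hunion hd12 hd13 hd23 hne1 hne2 hne3 hsum1 hsum2 hsum3
    hspan h12 h23
end

section
/- (Non-simpliciality and dimension of the basis, case m₃ = m₂ > m₁ ≥ 2) Assume m₃ = m₂ > m₁ ≥ 2. Then the convex hull of V₂ ∪ V₃ is an extreme subset of the convex hull of S with V₂ ∪ V₃ ≠ S, the set V₂ ∪ V₃ (of 2m₂ elements) is affinely dependent, and the affine span of V₂ ∪ V₃ has dimension 2m₂ − 2. In particular conv(S) is not a simplicial polytope. -/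
/-!
Since `S` has `n + 2` elements and spans an `n`-dimensional space, its linear relations form a
plane, spanned by `𝟙_{V₁} - 𝟙_{V₂}` and `𝟙_{V₁} - 𝟙_{V₃}`. Such a relation takes the value `a + b`
on `V₁`, `-a` on `V₂` and `-b` on `V₃`, and its coefficients sum to `(m₁ - m₂)(a + b)`; as
`m₁ ≠ m₂`, every affine relation of `S` vanishes on `V₁`. So a convex combination of `S` lying in
`conv (V₂ ∪ V₃)` can only be inside a segment whose ends put no weight on `V₁`, which makes
`conv (V₂ ∪ V₃)` a face. On `V₂ ∪ V₃` the affine relations are the multiples of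
`𝟙_{V₂} - 𝟙_{V₃}`: removing one point `v₃ ∈ V₃` leaves `2m₂ - 1` affinely independent points,
whose affine span still contains `v₃ = ∑ V₂ - ∑ (V₃ \ {v₃})`.
-/

open Module Submodule

namespace Finset

section

variable {E : Type*} [AddCommGroup E] [Module ℝ E]

theorem finrank_span_add_finrank_ker_linearCombination_s11 (S : Finset E) :
    finrank ℝ (span ℝ (S : Set E)) +
      finrank ℝ (LinearMap.ker (Fintype.linearCombination ℝ ((↑) : S → E))) = #S := by
  have hrange : LinearMap.range (Fintype.linearCombination ℝ ((↑) : S → E)) =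
      span ℝ (S : Set E) := by
    rw [Fintype.range_linearCombination, Subtype.range_coe]
  rw [← hrange, LinearMap.finrank_range_add_finrank_ker, finrank_fintype_fun_eq_card,
    Fintype.card_coe]

theorem affineIndependent_coe_iff {F : Finset E} :
    AffineIndependent ℝ (fun v : F => (v : E)) ↔
      ∀ c : E → ℝ, ∑ v ∈ F, c v = 0 → ∑ v ∈ F, c v • v = 0 → ∀ v ∈ F, c v = 0 := by
  classical
  rw [affineIndependent_iff_of_fintype]
  constructor
  · intro h c hc₀ hc₁ v hv
    refine h (fun v => c v) ?_ ?_ ⟨v, hv⟩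
    · rwa [sum_coe_sort F c]
    · rwa [univ.weightedVSub_eq_linear_combination (by rwa [sum_coe_sort F c]),
        sum_coe_sort F (fun v => c v • v)]
  · intro h w hw₀ hw₁ v
    let c : E → ℝ := fun v => if hv : v ∈ F then w ⟨v, hv⟩ else 0
    have hc (v : F) : c v = w v := dif_pos v.2
    rw [univ.weightedVSub_eq_linear_combination hw₀] at hw₁
    rw [← hc]
    refine h c ?_ ?_ v v.2
    · rw [← sum_coe_sort F c]; simpa only [hc] using hw₀
    · rw [← sum_coe_sort F (fun v => c v • v)]; simpa only [hc] using hw₁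

theorem sum_indicator_smul {S F : Finset E} (hFS : F ⊆ S) (c : E → ℝ) :
    ∑ v ∈ S, (F : Set E).indicator c v • v = ∑ v ∈ F, c v • v := by
  rw [← sum_indicator_subset (fun v => c v • v) hFS]
  exact sum_congr rfl fun v _ => (Set.indicator_smul_apply_left _ c id v).symm

theorem sum_smul_mem_convexHull_of_eq_zero {S T : Finset E} (hTS : T ⊆ S) {w : E → ℝ}
    (hw₀ : ∀ v ∈ S, 0 ≤ w v) (hw₁ : ∑ v ∈ S, w v = 1) (hwT : ∀ v ∈ S, v ∉ T → w v = 0) :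
    ∑ v ∈ S, w v • v ∈ convexHull ℝ (T : Set E) := by
  refine mem_convexHull'.2 ⟨w, fun v hv => hw₀ v (hTS hv), ?_, ?_⟩
  · rw [sum_subset hTS hwT, hw₁]
  · exact sum_subset hTS fun v hv hvT => by rw [hwT v hv hvT, zero_smul]

theorem isExtreme_convexHull_of_affineRelation_eq_zero {S T : Finset E} (hTS : T ⊆ S)
    (h : ∀ c : E → ℝ, ∑ v ∈ S, c v = 0 → ∑ v ∈ S, c v • v = 0 → ∀ v ∈ S, v ∉ T → c v = 0) :
    IsExtreme ℝ (convexHull ℝ (S : Set E)) (convexHull ℝ (T : Set E)) := by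
  refine ⟨convexHull_mono (coe_subset.2 hTS), ?_⟩
  rintro _ hx₁ _ hx₂ x hx ⟨t, u, ht, hu, htu, rfl⟩
  obtain ⟨w₁, hw₁₀, hw₁, rfl⟩ := mem_convexHull'.1 hx₁
  obtain ⟨w₂, hw₂₀, hw₂, rfl⟩ := mem_convexHull'.1 hx₂
  obtain ⟨w, -, hw, hwx⟩ := mem_convexHull'.1 hx
  -- `t w₁ + u w₂ - w` is an affine relation of `S`, and off `T` it is nonnegative
  have hc := h (fun v => t * w₁ v + u * w₂ v - (T : Set E).indicator w v) ?_ ?_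
  · refine sum_smul_mem_convexHull_of_eq_zero hTS hw₁₀ hw₁ fun v hv hvT => ?_
    have hv' : t * w₁ v + u * w₂ v = 0 := by
      simpa [Set.indicator_of_notMem (mem_coe.not.2 hvT)] using hc v hv hvT
    nlinarith [mul_nonneg ht.le (hw₁₀ v hv), mul_nonneg hu.le (hw₂₀ v hv)]
  · simp_rw [sum_sub_distrib, sum_add_distrib, ← mul_sum, hw₁, hw₂, sum_indicator_subset _ hTS,
      hw]
    linarith
  · simp_rw [sub_smul, add_smul, mul_smul, sum_sub_distrib, sum_add_distrib, ← smul_sum,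
      sum_indicator_smul hTS, hwx, sub_self]

theorem finrank_vectorSpan_of_affineIndependent {F : Finset E}
    (hF : AffineIndependent ℝ (fun v : F => (v : E))) :
    finrank ℝ (vectorSpan ℝ (F : Set E)) = #F - 1 := by
  rcases F.eq_empty_or_nonempty with rfl | hne
  · rw [coe_empty, vectorSpan_empty, finrank_bot, card_empty]
  · have := hF.finrank_vectorSpan (n := #F - 1) (by rw [Fintype.card_coe]; have := hne.card_pos; omega)
    rwa [Subtype.range_val_subtype] at this

variable [DecidableEq E] {V W : Finset E}

theorem not_affineIndependent_union_of_sum_eq (hd : Disjoint V W) (hV : V.Nonempty)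
    (hcard : #V = #W) (hsum : ∑ v ∈ V, v = ∑ v ∈ W, v) :
    ¬ AffineIndependent ℝ (fun v : (V ∪ W : Finset E) => (v : E)) := by
  rw [affineIndependent_coe_iff]
  intro h
  obtain ⟨v, hv⟩ := hV
  have := h (fun v => if v ∈ V then 1 else -1) ?_ ?_ v (mem_union_left _ hv)
  · simp [hv] at this
  · rw [sum_union hd, sum_ite_of_true (fun _ => id),
      sum_ite_of_false (fun _ h => disjoint_right.1 hd h)]
    simp [hcard]
  · rw [sum_union hd]
    simp_rw [ite_smul, one_smul, neg_one_smul]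
    rw [sum_ite_of_true (fun _ => id), sum_ite_of_false (fun _ h => disjoint_right.1 hd h),
      sum_neg_distrib, hsum, add_neg_cancel]

theorem mem_affineSpan_union_erase_of_sum_eq (hd : Disjoint V W) (hcard : #V = #W)
    (hsum : ∑ v ∈ V, v = ∑ v ∈ W, v) {w : E} (hw : w ∈ W) :
    w ∈ affineSpan ℝ ((V ∪ W.erase w : Finset E) : Set E) := by
  have hd' : Disjoint V (W.erase w) := disjoint_of_subset_right (erase_subset _ _) hd
  -- `w = ∑ V - ∑ (W.erase w)`, with weights summing to `#V - (#W - 1) = 1`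
  let c : E → ℝ := fun v => if v ∈ V then 1 else -1
  have hc : ∑ v ∈ V ∪ W.erase w, c v = 1 := by
    rw [sum_union hd', sum_ite_of_true (fun _ => id),
      sum_ite_of_false (fun _ h => disjoint_right.1 hd' h)]
    have := card_pos.2 ⟨w, hw⟩
    simp [card_erase_of_mem hw, hcard, Nat.cast_sub this]
  have := affineCombination_mem_affineSpan_image hc (s' := ↑(V ∪ W.erase w))
    (fun _ h h' => absurd h h') id
  rw [affineCombination_eq_linear_combination _ _ _ hc, Set.image_id] at this
  convert this using 1
  simp_rw [c, ite_smul, one_smul, neg_one_smul, id]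
  rw [sum_union hd', sum_ite_of_true (fun _ => id),
    sum_ite_of_false (fun _ h => disjoint_right.1 hd' h), sum_neg_distrib, hsum,
    ← sum_erase_add W (fun v => v) hw, add_neg_cancel_comm]

end

structure IsEqualSumPartition {E : Type*} [AddCommMonoid E] [DecidableEq E]
    (S V₁ V₂ V₃ : Finset E) : Prop where
  union_eq : V₁ ∪ V₂ ∪ V₃ = S
  disjoint₁₂ : Disjoint V₁ V₂
  disjoint₁₃ : Disjoint V₁ V₃
  disjoint₂₃ : Disjoint V₂ V₃
  nonempty₁ : V₁.Nonempty
  nonempty₂ : V₂.Nonempty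
  nonempty₃ : V₃.Nonempty
  sum₁₂ : ∑ v ∈ V₁, v = ∑ v ∈ V₂, v
  sum₁₃ : ∑ v ∈ V₁, v = ∑ v ∈ V₃, v

namespace IsEqualSumPartition

section

variable {E : Type*} [AddCommMonoid E] [DecidableEq E] {S V₁ V₂ V₃ : Finset E}

theorem subset₁ (hP : IsEqualSumPartition S V₁ V₂ V₃) : V₁ ⊆ S :=
  hP.union_eq ▸ subset_union_left.trans subset_union_left

theorem subset₂ (hP : IsEqualSumPartition S V₁ V₂ V₃) : V₂ ⊆ S :=
  hP.union_eq ▸ subset_union_right.trans subset_union_left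

theorem subset₃ (hP : IsEqualSumPartition S V₁ V₂ V₃) : V₃ ⊆ S :=
  hP.union_eq ▸ subset_union_right

end

variable {E : Type*} [AddCommGroup E] [Module ℝ E] [DecidableEq E] {S V₁ V₂ V₃ : Finset E}

theorem exists_eq_of_sum_smul_eq_zero (hP : IsEqualSumPartition S V₁ V₂ V₃)
    (hcard : #S = finrank ℝ (span ℝ (S : Set E)) + 2) {c : E → ℝ}
    (hc : ∑ v ∈ S, c v • v = 0) :
    ∃ a b : ℝ, (∀ v ∈ V₁, c v = a + b) ∧ (∀ v ∈ V₂, c v = -a) ∧ (∀ v ∈ V₃, c v = -b) := by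
  let L := Fintype.linearCombination ℝ ((↑) : S → E)
  have hker : finrank ℝ (LinearMap.ker L) = 2 := by
    have h := S.finrank_span_add_finrank_ker_linearCombination_s11
    change _ + finrank ℝ (LinearMap.ker L) = _ at h
    omega
  let ind (W : Finset E) (v : S) : ℝ := if (v : E) ∈ W then 1 else 0
  have hind {W : Finset E} (hW : W ⊆ S) : L (ind W) = ∑ v ∈ W, v := by
    simp_rw [L, Fintype.linearCombination_apply, ind, ite_smul, one_smul, zero_smul]
    rw [sum_coe_sort S (fun v => if v ∈ W then v else 0), sum_ite_mem, inter_eq_right.2 hW]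
  let r₁ := ind V₁ - ind V₂
  let r₂ := ind V₁ - ind V₃
  have hr₁ : r₁ ∈ LinearMap.ker L := by
    rw [LinearMap.mem_ker, map_sub, hind hP.subset₁, hind hP.subset₂, hP.sum₁₂, sub_self]
  have hr₂ : r₂ ∈ LinearMap.ker L := by
    rw [LinearMap.mem_ker, map_sub, hind hP.subset₁, hind hP.subset₃, hP.sum₁₃, sub_self]
  have hli : LinearIndependent ℝ ![r₁, r₂] := by
    obtain ⟨v₂, hv₂⟩ := hP.nonempty₂
    obtain ⟨v₃, hv₃⟩ := hP.nonempty₃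
    refine LinearIndependent.pair_iff.2 fun s t h => ⟨?_, ?_⟩
    · simpa [r₁, r₂, ind, hv₂, disjoint_right.1 hP.disjoint₁₂ hv₂,
        disjoint_left.1 hP.disjoint₂₃ hv₂] using congrFun h ⟨v₂, hP.subset₂ hv₂⟩
    · simpa [r₁, r₂, ind, hv₃, disjoint_right.1 hP.disjoint₁₃ hv₃,
        disjoint_right.1 hP.disjoint₂₃ hv₃] using congrFun h ⟨v₃, hP.subset₃ hv₃⟩
  have hspan : span ℝ {r₁, r₂} = LinearMap.ker L := by
    refine eq_of_le_of_finrank_le (span_le.2 (Set.pair_subset hr₁ hr₂)) ?_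
    rw [hker, ← Matrix.range_cons_cons_empty r₁ r₂ ![], finrank_span_eq_card hli,
      Fintype.card_fin]
  have hcL : (fun v : S => c v) ∈ LinearMap.ker L := by
    rw [LinearMap.mem_ker, Fintype.linearCombination_apply, sum_coe_sort S (fun v => c v • v), hc]
  obtain ⟨a, b, hab⟩ := mem_span_pair.1 (hspan ▸ hcL)
  have hcoef (v : E) (hv : v ∈ S) :
      c v = a * (ind V₁ ⟨v, hv⟩ - ind V₂ ⟨v, hv⟩) + b * (ind V₁ ⟨v, hv⟩ - ind V₃ ⟨v, hv⟩) :=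
    (congrFun hab ⟨v, hv⟩).symm
  refine ⟨a, b, fun v hv => ?_, fun v hv => ?_, fun v hv => ?_⟩
  · simp [hcoef v (hP.subset₁ hv), ind, hv, disjoint_left.1 hP.disjoint₁₂ hv,
      disjoint_left.1 hP.disjoint₁₃ hv]
  · simp [hcoef v (hP.subset₂ hv), ind, hv, disjoint_right.1 hP.disjoint₁₂ hv,
      disjoint_left.1 hP.disjoint₂₃ hv]
  · simp [hcoef v (hP.subset₃ hv), ind, hv, disjoint_right.1 hP.disjoint₁₃ hv,
      disjoint_right.1 hP.disjoint₂₃ hv]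

theorem affineRelation_eq_zero_of_mem₁ (hP : IsEqualSumPartition S V₁ V₂ V₃)
    (hcard : #S = finrank ℝ (span ℝ (S : Set E)) + 2) (h₁₂ : #V₁ ≠ #V₂) (h₂₃ : #V₃ = #V₂)
    {c : E → ℝ} (hc₀ : ∑ v ∈ S, c v = 0) (hc : ∑ v ∈ S, c v • v = 0) : ∀ v ∈ V₁, c v = 0 := by
  obtain ⟨a, b, h₁, h₂, h₃⟩ := hP.exists_eq_of_sum_smul_eq_zero hcard hc
  have hsum : (#V₁ - #V₂ : ℝ) * (a + b) = 0 := by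
    rw [← hP.union_eq, sum_union (disjoint_union_left.2 ⟨hP.disjoint₁₃, hP.disjoint₂₃⟩),
      sum_union hP.disjoint₁₂, sum_congr rfl h₁, sum_congr rfl h₂, sum_congr rfl h₃] at hc₀
    simp only [sum_const, nsmul_eq_mul, h₂₃] at hc₀
    linarith
  have hab : a + b = 0 :=
    (mul_eq_zero.1 hsum).resolve_left (sub_ne_zero.2 (by exact_mod_cast h₁₂))
  intro v hv
  rw [h₁ v hv, hab]

theorem isExtreme_convexHull_union (hP : IsEqualSumPartition S V₁ V₂ V₃)
    (hcard : #S = finrank ℝ (span ℝ (S : Set E)) + 2) (h₁₂ : #V₁ ≠ #V₂) (h₂₃ : #V₃ = #V₂) :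
    IsExtreme ℝ (convexHull ℝ (S : Set E)) (convexHull ℝ ((V₂ ∪ V₃ : Finset E) : Set E)) := by
  refine isExtreme_convexHull_of_affineRelation_eq_zero (union_subset hP.subset₂ hP.subset₃)
    fun c hc₀ hc v hv hvT => hP.affineRelation_eq_zero_of_mem₁ hcard h₁₂ h₂₃ hc₀ hc v ?_
  rw [← hP.union_eq, union_assoc] at hv
  exact (mem_union.1 hv).resolve_right hvT

theorem affineIndependent_union_erase (hP : IsEqualSumPartition S V₁ V₂ V₃)
    (hcard : #S = finrank ℝ (span ℝ (S : Set E)) + 2) {v₃ : E} (hv₃ : v₃ ∈ V₃) :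
    AffineIndependent ℝ (fun v : (V₂ ∪ V₃.erase v₃ : Finset E) => (v : E)) := by
  set F := V₂ ∪ V₃.erase v₃
  have hFS : F ⊆ S := union_subset hP.subset₂ ((erase_subset _ _).trans hP.subset₃)
  refine affineIndependent_coe_iff.2 fun c _ hc v hv => ?_
  obtain ⟨v₁, hv₁⟩ := hP.nonempty₁
  obtain ⟨a, b, h₁, h₂, h₃⟩ :=
    hP.exists_eq_of_sum_smul_eq_zero hcard ((sum_indicator_smul hFS c).trans hc)
  have hv₁F : v₁ ∉ F := fun h => (mem_union.1 h).elim (disjoint_left.1 hP.disjoint₁₂ hv₁)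
    fun h => disjoint_left.1 hP.disjoint₁₃ hv₁ (mem_of_mem_erase h)
  have hv₃F : v₃ ∉ F := fun h => (mem_union.1 h).elim (disjoint_right.1 hP.disjoint₂₃ hv₃)
    (notMem_erase v₃ V₃)
  have hab : a + b = 0 := by rw [← h₁ v₁ hv₁, Set.indicator_of_notMem (mem_coe.not.2 hv₁F)]
  have hb : b = 0 := by
    rw [← neg_eq_zero, ← h₃ v₃ hv₃, Set.indicator_of_notMem (mem_coe.not.2 hv₃F)]
  rw [← Set.indicator_of_mem (mem_coe.2 hv) c]
  rcases mem_union.1 hv with hv | hv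
  · rw [h₂ v hv]; linarith
  · rw [h₃ v (mem_of_mem_erase hv), hb, neg_zero]

theorem finrank_direction_affineSpan_union (hP : IsEqualSumPartition S V₁ V₂ V₃)
    (hcard : #S = finrank ℝ (span ℝ (S : Set E)) + 2) (h₂₃ : #V₃ = #V₂) :
    finrank ℝ (affineSpan ℝ ((V₂ ∪ V₃ : Finset E) : Set E)).direction = 2 * #V₂ - 2 := by
  obtain ⟨v₃, hv₃⟩ := hP.nonempty₃
  have hspan := mem_affineSpan_union_erase_of_sum_eq hP.disjoint₂₃ h₂₃.symm
    (hP.sum₁₂.symm.trans hP.sum₁₃) hv₃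
  rw [← insert_erase hv₃, union_insert, coe_insert, affineSpan_insert_eq_affineSpan ℝ hspan,
    direction_affineSpan, finrank_vectorSpan_of_affineIndependent
      (hP.affineIndependent_union_erase hcard hv₃),
    card_union_of_disjoint (disjoint_of_subset_right (erase_subset _ _) hP.disjoint₂₃),
    card_erase_of_mem hv₃, h₂₃]
  have := card_pos.2 ⟨v₃, hv₃⟩
  omega

end IsEqualSumPartition

end Finset

open Finset

theorem stmt_11_general
    (n : ℕ)
    (S V1 V2 V3 : Finset (Fin (2 * n) → ℝ))
    (hScard : S.card = n + 2)
    (hunion : V1 ∪ V2 ∪ V3 = S)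
    (hd12 : Disjoint V1 V2) (hd13 : Disjoint V1 V3) (hd23 : Disjoint V2 V3)
    (hne1 : V1.Nonempty) (hne2 : V2.Nonempty) (hne3 : V3.Nonempty)
    (hsum1 : ∑ v ∈ V1, v = fun _ => (1 : ℝ))
    (hsum2 : ∑ v ∈ V2, v = fun _ => (1 : ℝ))
    (hsum3 : ∑ v ∈ V3, v = fun _ => (1 : ℝ))
    (hspan : Module.finrank ℝ (Submodule.span ℝ (S : Set (Fin (2 * n) → ℝ))) = n)
    (h12 : V1.card < V2.card) (h23 : V3.card = V2.card)
    : IsExtreme ℝ (convexHull ℝ (S : Set (Fin (2 * n) → ℝ)))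
        (convexHull ℝ ((V2 ∪ V3 : Finset (Fin (2 * n) → ℝ)) : Set (Fin (2 * n) → ℝ))) ∧
      V2 ∪ V3 ≠ S ∧
      (V2 ∪ V3).card = 2 * V2.card ∧
      ¬ AffineIndependent ℝ (fun x : {x // x ∈ V2 ∪ V3} => (x : Fin (2 * n) → ℝ)) ∧
      Module.finrank ℝ
        (affineSpan ℝ ((V2 ∪ V3 : Finset (Fin (2 * n) → ℝ)) : Set (Fin (2 * n) → ℝ))).direction =
        2 * V2.card - 2 ∧
      ¬ (∀ F ⊆ S, F.Nonempty → F ≠ S →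
          IsExtreme ℝ (convexHull ℝ (S : Set (Fin (2 * n) → ℝ)))
            (convexHull ℝ (F : Set (Fin (2 * n) → ℝ))) →
          AffineIndependent ℝ (fun x : {x // x ∈ F} => (x : Fin (2 * n) → ℝ))) := by
  have hP : IsEqualSumPartition S V1 V2 V3 :=
    ⟨hunion, hd12, hd13, hd23, hne1, hne2, hne3, hsum1.trans hsum2.symm, hsum1.trans hsum3.symm⟩
  have hcard : S.card = finrank ℝ (span ℝ (S : Set (Fin (2 * n) → ℝ))) + 2 := by rw [hspan, hScard]
  have hextreme := hP.isExtreme_convexHull_union hcard h12.ne h23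
  have hne : V2 ∪ V3 ≠ S := fun h => by
    obtain ⟨v, hv⟩ := hne1
    exact disjoint_left.1 (disjoint_union_right.2 ⟨hd12, hd13⟩) hv (h ▸ hP.subset₁ hv)
  have hdep := not_affineIndependent_union_of_sum_eq hd23 hne2 h23.symm
    (hsum2.trans hsum3.symm)
  refine ⟨hextreme, hne, by rw [card_union_of_disjoint hd23, h23]; omega, hdep,
    hP.finrank_direction_affineSpan_union hcard h23, fun h => hdep ?_⟩
  exact h _ (union_subset hP.subset₂ hP.subset₃) (hne2.mono subset_union_left) hne hextreme

theorem stmt_11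
    (n : ℕ) (hn : 0 < n)
    (S V1 V2 V3 : Finset (Fin (2 * n) → ℝ))
    (h01 : ∀ v ∈ S, ∀ i, v i = 0 ∨ v i = 1)
    (hScard : S.card = n + 2)
    (hunion : V1 ∪ V2 ∪ V3 = S)
    (hd12 : Disjoint V1 V2) (hd13 : Disjoint V1 V3) (hd23 : Disjoint V2 V3)
    (hne1 : V1.Nonempty) (hne2 : V2.Nonempty) (hne3 : V3.Nonempty)
    (hsum1 : ∑ v ∈ V1, v = fun _ => (1 : ℝ))
    (hsum2 : ∑ v ∈ V2, v = fun _ => (1 : ℝ))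
    (hsum3 : ∑ v ∈ V3, v = fun _ => (1 : ℝ))
    (hspan : Module.finrank ℝ (Submodule.span ℝ (S : Set (Fin (2 * n) → ℝ))) = n)
    (hm1 : 2 ≤ V1.card) (h12 : V1.card < V2.card) (h23 : V3.card = V2.card)
    : IsExtreme ℝ (convexHull ℝ (S : Set (Fin (2 * n) → ℝ)))
        (convexHull ℝ ((V2 ∪ V3 : Finset (Fin (2 * n) → ℝ)) : Set (Fin (2 * n) → ℝ))) ∧
      V2 ∪ V3 ≠ S ∧
      (V2 ∪ V3).card = 2 * V2.card ∧
      ¬ AffineIndependent ℝ (fun x : {x // x ∈ V2 ∪ V3} => (x : Fin (2 * n) → ℝ)) ∧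
      Module.finrank ℝ
        (affineSpan ℝ ((V2 ∪ V3 : Finset (Fin (2 * n) → ℝ)) : Set (Fin (2 * n) → ℝ))).direction =
        2 * V2.card - 2 ∧
      ¬ (∀ F ⊆ S, F.Nonempty → F ≠ S →
          IsExtreme ℝ (convexHull ℝ (S : Set (Fin (2 * n) → ℝ)))
            (convexHull ℝ (F : Set (Fin (2 * n) → ℝ))) →
          AffineIndependent ℝ (fun x : {x // x ∈ F} => (x : Fin (2 * n) → ℝ))) :=
  stmt_11_general n S V1 V2 V3 hScard hunion hd12 hd13 hd23 hne1 hne2 hne3 hsum1 hsum2 hsum3 hspan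
    h12 h23
end

section
/- (Pyramid structure, case m₃ = m₂ > m₁ ≥ 2) Assume m₃ = m₂ > m₁ ≥ 2. Then for every v ∈ V₁, the point v does not belong to the affine span of S ∖ {v}; hence conv(S) is an m₁-fold pyramid whose apexes are the points of V₁. -/
/-! Since the `n + 2` points of `S` span an `n`-dimensional space, their linear relations form a
plane, spanned by `𝟙_{V₁} - 𝟙_{V₂}` and `𝟙_{V₂} - 𝟙_{V₃}`. If `v ∈ V₁` lay in the affine span of the
other points, some relation `a (𝟙_{V₁} - 𝟙_{V₂}) + b (𝟙_{V₂} - 𝟙_{V₃})` would have coefficient `1`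
at `v` and coefficient sum `0`. The first condition forces `a = 1`, and then the coefficient sum is
`m₁ - m₂ + b (m₂ - m₃) = m₁ - m₂ ≠ 0`. -/

open Module

theorem Submodule.exists_smul_add_smul_eq_of_finrank_eq_two {K M : Type*} [Field K]
    [AddCommGroup M] [Module K M] {P : Submodule K M} (hP : finrank K P = 2) {x y z : M}
    (hx : x ∈ P) (hy : y ∈ P) (hxy : LinearIndependent K ![x, y]) (hz : z ∈ P) : ∃ a b : K, a • x + b • y = z := by
  have : FiniteDimensional K P := Module.finite_of_finrank_pos (by omega)
  have hspan : Submodule.span K {x, y} = P := by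
    refine Submodule.eq_of_le_of_finrank_eq ?_ ?_
    · rw [Submodule.span_le, Set.insert_subset_iff, Set.singleton_subset_iff]
      exact ⟨hx, hy⟩
    · rw [hP, ← Matrix.range_cons_cons_empty, finrank_span_eq_card hxy, Fintype.card_fin]
  rw [← hspan, Submodule.mem_span_pair] at hz
  exact hz

theorem linearIndependent_pair_of_apply {ι K : Type*} [Field K] {r₁ r₂ : ι → K} {i j : ι}
    (h₁ : r₁ i ≠ 0) (h₂ : r₂ i = 0) (h₃ : r₂ j ≠ 0) : LinearIndependent K ![r₁, r₂] := by
  rw [LinearIndependent.pair_iff]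
  intro s t hst
  have hs : s = 0 := by
    simpa [h₁, h₂] using congrFun hst i
  subst hs
  exact ⟨rfl, by simpa [h₃] using congrFun hst j⟩

namespace Finset

variable {E : Type*}

noncomputable def restrictIndicator {M : Type*} [Zero M] (S V : Finset E) (w : E → M) : S → M :=
  fun i => (V : Set E).indicator w i

theorem sum_restrictIndicator {M : Type*} [AddCommMonoid M] {S V : Finset E} (hV : V ⊆ S)
    (w : E → M) : ∑ i, S.restrictIndicator V w i = ∑ u ∈ V, w u :=
  (S.sum_coe_sort _).trans (sum_indicator_subset w hV)

theorem sum_restrictIndicator_one {M : Type*} [AddCommMonoidWithOne M] {S V : Finset E}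
    (hV : V ⊆ S) : ∑ i, S.restrictIndicator V (1 : E → M) i = V.card := by
  rw [sum_restrictIndicator hV, Pi.one_def, sum_const, nsmul_one]

variable (K : Type*) [Field K] [AddCommGroup E] [Module K E]

def linearRelations (S : Finset E) : Submodule K (S → K) :=
  LinearMap.ker (Fintype.linearCombination K ((↑) : S → E))

variable {K}

theorem mem_linearRelations {S : Finset E} {c : S → K} :
    c ∈ S.linearRelations K ↔ ∑ i, c i • (i : E) = 0 := by
  rw [linearRelations, LinearMap.mem_ker, Fintype.linearCombination_apply]

theorem finrank_linearRelations_add_finrank_span (S : Finset E) :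
    finrank K (S.linearRelations K) + finrank K (Submodule.span K (S : Set E)) = S.card := by
  have h := LinearMap.finrank_range_add_finrank_ker (Fintype.linearCombination K ((↑) : S → E))
  rw [Fintype.range_linearCombination, Subtype.range_coe_subtype, Finset.setOfPred_mem,
    finrank_fintype_fun_eq_card, Fintype.card_coe] at h
  rw [linearRelations]
  omega

theorem sum_restrictIndicator_smul {S V : Finset E} (hV : V ⊆ S) (w : E → K) :
    ∑ i, S.restrictIndicator V w i • (i : E) = ∑ u ∈ V, w u • u := by
  rw [← sum_restrictIndicator hV (fun u => w u • u)]
  exact sum_congr rfl fun i _ => (Set.indicator_smul_apply_left _ w id i).symm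

theorem restrictIndicator_sub_mem_linearRelations {S V W : Finset E} (hV : V ⊆ S) (hW : W ⊆ S)
    (hsum : ∑ u ∈ V, u = ∑ u ∈ W, u) :
    S.restrictIndicator V 1 - S.restrictIndicator W 1 ∈ S.linearRelations K := by
  simp_rw [mem_linearRelations, Pi.sub_apply, sub_smul, sum_sub_distrib,
    sum_restrictIndicator_smul hV, sum_restrictIndicator_smul hW, Pi.one_apply, one_smul, hsum,
    sub_self]

theorem exists_mem_linearRelations_of_mem_affineSpan_sdiff [DecidableEq E] {S : Finset E} {v : E}
    (hv : v ∈ S) (h : v ∈ affineSpan K ((S \ {v} : Finset E) : Set E)) :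
    ∃ d ∈ S.linearRelations K, ∑ i, d i = 0 ∧ d ⟨v, hv⟩ = 1 := by
  rw [← Set.image_id ((S \ {v} : Finset E) : Set E)] at h
  obtain ⟨T, w, hT, hw, hvw⟩ := eq_affineCombination_of_mem_affineSpan_image h
  rw [coe_subset] at hT
  have hTS : T ⊆ S := hT.trans sdiff_subset
  have hvS : {v} ⊆ S := singleton_subset_iff.2 hv
  refine ⟨S.restrictIndicator {v} 1 - S.restrictIndicator T w, ?_, ?_, ?_⟩
  · rw [mem_linearRelations]
    simp_rw [Pi.sub_apply, sub_smul, sum_sub_distrib, sum_restrictIndicator_smul hTS,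
      sum_restrictIndicator_smul hvS]
    rw [affineCombination_eq_linear_combination _ _ _ hw] at hvw
    rw [sum_singleton, Pi.one_apply, one_smul, sub_eq_zero]
    exact hvw
  · simp_rw [Pi.sub_apply, sum_sub_distrib, sum_restrictIndicator hTS,
      sum_restrictIndicator hvS, hw]
    simp
  · have hvT : v ∉ T := fun h => by simpa using hT h
    simp [restrictIndicator, hvT]

theorem notMem_affineSpan_sdiff_singleton_of_card_ne [CharZero K] [DecidableEq E]
    {S V₁ V₂ V₃ : Finset E} (h₁ : V₁ ⊆ S) (h₂ : V₂ ⊆ S) (h₃ : V₃ ⊆ S)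
    (hd₁₂ : Disjoint V₁ V₂) (hd₁₃ : Disjoint V₁ V₃) (hd₂₃ : Disjoint V₂ V₃) (hne₃ : V₃.Nonempty)
    (hsum₁₂ : ∑ u ∈ V₁, u = ∑ u ∈ V₂, u) (hsum₂₃ : ∑ u ∈ V₂, u = ∑ u ∈ V₃, u)
    (hS : finrank K (Submodule.span K (S : Set E)) + 2 = S.card)
    (hcard₁₂ : V₁.card ≠ V₂.card) (hcard₂₃ : V₃.card = V₂.card) {v : E} (hv : v ∈ V₁) :
    v ∉ affineSpan K ((S \ {v} : Finset E) : Set E) := by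
  intro hvaff
  set r₁ := S.restrictIndicator V₁ (1 : E → K) - S.restrictIndicator V₂ 1
  set r₂ := S.restrictIndicator V₂ (1 : E → K) - S.restrictIndicator V₃ 1
  have hr₁ : r₁ ∈ S.linearRelations K := restrictIndicator_sub_mem_linearRelations h₁ h₂ hsum₁₂
  have hr₂ : r₂ ∈ S.linearRelations K := restrictIndicator_sub_mem_linearRelations h₂ h₃ hsum₂₃
  have hv₂ : v ∉ V₂ := disjoint_left.1 hd₁₂ hv
  have hv₃ : v ∉ V₃ := disjoint_left.1 hd₁₃ hv
  obtain ⟨u, hu⟩ := hne₃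
  have hu₂ : u ∉ V₂ := disjoint_right.1 hd₂₃ hu
  have hr₁v : r₁ ⟨v, h₁ hv⟩ = 1 := by simp [r₁, restrictIndicator, hv, hv₂]
  have hr₂v : r₂ ⟨v, h₁ hv⟩ = 0 := by simp [r₂, restrictIndicator, hv₂, hv₃]
  have hr₂u : r₂ ⟨u, h₃ hu⟩ = -1 := by simp [r₂, restrictIndicator, hu, hu₂]
  have hli : LinearIndependent K ![r₁, r₂] :=
    linearIndependent_pair_of_apply (hr₁v ▸ one_ne_zero) hr₂v (hr₂u ▸ neg_ne_zero.2 one_ne_zero)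
  obtain ⟨d, hd, hdsum, hdv⟩ := exists_mem_linearRelations_of_mem_affineSpan_sdiff (h₁ hv) hvaff
  have hrel : finrank K (S.linearRelations K) = 2 := by
    have := finrank_linearRelations_add_finrank_span (K := K) S
    omega
  obtain ⟨a, b, rfl⟩ := Submodule.exists_smul_add_smul_eq_of_finrank_eq_two hrel hr₁ hr₂ hli hd
  have ha : a = 1 := by
    simpa only [Pi.add_apply, Pi.smul_apply, smul_eq_mul, hr₁v, hr₂v, mul_one, mul_zero,
      add_zero] using hdv
  have hsum : a * (V₁.card - V₂.card) + b * (V₂.card - V₃.card) = (0 : K) := by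
    simpa only [r₁, r₂, Pi.add_apply, Pi.smul_apply, Pi.sub_apply, smul_eq_mul, sum_add_distrib,
      ← mul_sum, sum_sub_distrib, sum_restrictIndicator_one h₁, sum_restrictIndicator_one h₂,
      sum_restrictIndicator_one h₃] using hdsum
  rw [ha, hcard₂₃, one_mul, sub_self, mul_zero, add_zero, sub_eq_zero, Nat.cast_inj] at hsum
  exact hcard₁₂ hsum

end Finset

theorem stmt_12_general
    (n : ℕ)
    (S V1 V2 V3 : Finset (Fin (2 * n) → ℝ))
    (hScard : S.card = n + 2)
    (hunion : V1 ∪ V2 ∪ V3 = S)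
    (hd12 : Disjoint V1 V2) (hd13 : Disjoint V1 V3) (hd23 : Disjoint V2 V3)
    (hne3 : V3.Nonempty)
    (hsum1 : ∑ v ∈ V1, v = fun _ => (1 : ℝ))
    (hsum2 : ∑ v ∈ V2, v = fun _ => (1 : ℝ))
    (hsum3 : ∑ v ∈ V3, v = fun _ => (1 : ℝ))
    (hspan : Module.finrank ℝ (Submodule.span ℝ (S : Set (Fin (2 * n) → ℝ))) = n)
    (h12 : V1.card < V2.card) (h23 : V3.card = V2.card)
    : ∀ v ∈ V1, v ∉ affineSpan ℝ ((S \ {v} : Finset (Fin (2 * n) → ℝ)) : Set (Fin (2 * n) → ℝ)) := by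
  subst hunion
  intro v hv
  exact Finset.notMem_affineSpan_sdiff_singleton_of_card_ne
    (Finset.subset_union_left.trans Finset.subset_union_left)
    (Finset.subset_union_right.trans Finset.subset_union_left) Finset.subset_union_right
    hd12 hd13 hd23 hne3 (hsum1.trans hsum2.symm) (hsum2.trans hsum3.symm) (by omega) h12.ne h23 hv

theorem stmt_12
    (n : ℕ) (hn : 0 < n)
    (S V1 V2 V3 : Finset (Fin (2 * n) → ℝ))
    (h01 : ∀ v ∈ S, ∀ i, v i = 0 ∨ v i = 1)
    (hScard : S.card = n + 2)
    (hunion : V1 ∪ V2 ∪ V3 = S)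
    (hd12 : Disjoint V1 V2) (hd13 : Disjoint V1 V3) (hd23 : Disjoint V2 V3)
    (hne1 : V1.Nonempty) (hne2 : V2.Nonempty) (hne3 : V3.Nonempty)
    (hsum1 : ∑ v ∈ V1, v = fun _ => (1 : ℝ))
    (hsum2 : ∑ v ∈ V2, v = fun _ => (1 : ℝ))
    (hsum3 : ∑ v ∈ V3, v = fun _ => (1 : ℝ))
    (hspan : Module.finrank ℝ (Submodule.span ℝ (S : Set (Fin (2 * n) → ℝ))) = n)
    (hm1 : 2 ≤ V1.card) (h12 : V1.card < V2.card) (h23 : V3.card = V2.card)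
    : ∀ v ∈ V1, v ∉ affineSpan ℝ ((S \ {v} : Finset (Fin (2 * n) → ℝ)) : Set (Fin (2 * n) → ℝ)) :=
  stmt_12_general n S V1 V2 V3 hScard hunion hd12 hd13 hd23 hne3 hsum1 hsum2 hsum3 hspan h12 h23
end
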